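/- arXiv:2210.07637 — 9 statements merged into one kernel-verified Lean document; each statement's English description precedes it below -/
import Mathlib

section
/- Let P be a subset of a finite-dimensional real affine space that is locally polyhedral (every point has a neighborhood in which P agrees with a polyhedron), compact, and connected. Then P is a polytope (the convex hull of finitely many points). -/
/-!
Near each of its points `P` agrees with a polyhedron, so it is locally convex. By Tietze's
theorem it is then convex: fix a radius `ε` at which `P` is uniformly locally convex (Lebesgue
number lemma), join `x, y ∈ P` by a chain of `ε / 2`-steps in `P` (connectedness), and take, by
compactness, such a chain of the same length minimizing `∑ ‖p (i + 1) - p i‖ ^ 2`. Moving an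
inner vertex to the midpoint of its neighbours gives a competitor, so by the parallelogram law
all steps of the minimizer are equal; the minimizer then runs along `[x, y]`, covering it by
short segments each lying in `P`.

An extreme point of `P` is extreme in the polyhedron that `P` agrees with near it, and an
extreme point of a polyhedron is determined by the set of inequalities active at it. By
compactness `P` has finitely many extreme points, and Krein–Milman writes the compact convex
set `P` as their convex hull.
-/

open Set Metric Filter Topology

def IsLocallyConvex (𝕜 : Type*) {E : Type*} [Semiring 𝕜] [PartialOrder 𝕜] [AddCommMonoid E]
    [SMul 𝕜 E] [TopologicalSpace E] (S : Set E) : Prop :=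
  ∀ x ∈ S, ∃ U ∈ 𝓝 x, Convex 𝕜 (S ∩ U)

lemma IsLocallyConvex.image {𝕜 E F : Type*} [Semiring 𝕜] [PartialOrder 𝕜] [AddCommMonoid E]
    [AddCommMonoid F] [Module 𝕜 E] [Module 𝕜 F] [TopologicalSpace E] [TopologicalSpace F]
    {S : Set E} (hS : IsLocallyConvex 𝕜 S) (e : E ≃L[𝕜] F) : IsLocallyConvex 𝕜 (e '' S) := by
  rintro _ ⟨x, hx, rfl⟩
  obtain ⟨U, hU, hconv⟩ := hS x hx
  refine ⟨e '' U, e.toHomeomorph.isOpenMap.image_mem_nhds hU, ?_⟩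
  rw [← image_inter e.injective]
  exact hconv.linear_image (e : E →ₗ[𝕜] F)

lemma IsLocallyConvex.exists_forall_convex_inter_ball {E : Type*} [SeminormedAddCommGroup E]
    [NormedSpace ℝ E] {S : Set E} (hS : IsLocallyConvex ℝ S) (hc : IsCompact S) :
    ∃ ε > 0, ∀ x ∈ S, Convex ℝ (S ∩ ball x ε) := by
  choose! U hU hconv using hS
  obtain ⟨ε, hε, hball⟩ := lebesgue_number_lemma_of_metric hc (c := fun x : S ↦ interior (U x))
    (fun _ ↦ isOpen_interior)
    fun x hx ↦ mem_iUnion.2 ⟨⟨x, hx⟩, mem_interior_iff_mem_nhds.2 (hU x hx)⟩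
  refine ⟨ε, hε, fun x hx ↦ ?_⟩
  obtain ⟨⟨z, hz⟩, hxz⟩ := hball x hx
  rw [← inter_eq_right.2 (hxz.trans interior_subset), ← inter_assoc]
  exact (hconv z hz).inter (convex_ball x ε)

section StepChain

variable {α : Type*} [MetricSpace α]

/-- The terms after `p n` are only asked to lie in `S`, so that the chains of a given length in a
compact `S` form a compact set. -/
def IsStepChain (S : Set α) (δ : ℝ) (n : ℕ) (x y : α) (p : ℕ → α) : Prop :=
  (∀ i, p i ∈ S) ∧ p 0 = x ∧ p n = y ∧ ∀ i < n, dist (p i) (p (i + 1)) ≤ δ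

variable {S : Set α} {δ : ℝ} {n : ℕ} {x y z : α} {p : ℕ → α}

lemma IsStepChain.snoc (hp : IsStepChain S δ n x y p) (hz : z ∈ S) (hyz : dist y z ≤ δ) :
    IsStepChain S δ (n + 1) x z (fun i ↦ if i ≤ n then p i else z) := by
  obtain ⟨hpS, rfl, rfl, hstep⟩ := hp
  refine ⟨fun i ↦ ?_, by simp, by simp, fun i hi ↦ ?_⟩
  · dsimp only
    split_ifs
    exacts [hpS i, hz]
  · rcases Nat.lt_or_ge i n with hin | hin
    · simpa [hin.le, Nat.succ_le_of_lt hin] using hstep i hin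
    · obtain rfl : i = n := by omega
      simpa using hyz

lemma IsPreconnected.exists_isStepChain (hS : IsPreconnected S) (hδ : 0 < δ) (hx : x ∈ S)
    (hy : y ∈ S) : ∃ n p, IsStepChain S δ n x y p := by
  let Reachable (z : α) : Prop := ∃ n p, IsStepChain S δ n x z p
  refine hS.induction₂' (fun a b ↦ Reachable a → Reachable b) (fun a ha ↦ ?_)
    (fun _ _ _ _ _ _ hab hbc ↦ hbc ∘ hab) hx hy ⟨0, fun _ ↦ x, fun _ ↦ hx, rfl, rfl, by simp⟩
  filter_upwards [self_mem_nhdsWithin, mem_nhdsWithin_of_mem_nhds (ball_mem_nhds a hδ)]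
    with b hb hab
  rw [mem_ball'] at hab
  exact ⟨fun ⟨n, p, hp⟩ ↦ ⟨n + 1, _, hp.snoc hb hab.le⟩,
    fun ⟨n, p, hp⟩ ↦ ⟨n + 1, _, hp.snoc ha (dist_comm a b ▸ hab.le)⟩⟩

lemma isCompact_setOf_isStepChain (hS : IsCompact S) :
    IsCompact {p | IsStepChain S δ n x y p} := by
  refine (isCompact_pi_infinite fun _ ↦ hS).of_isClosed_subset ?_ fun p hp ↦ hp.1
  simp only [IsStepChain, ofPred_and, ofPred_forall]
  refine (isClosed_iInter fun i ↦ hS.isClosed.preimage (continuous_apply i)).inter <|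
    (isClosed_eq (continuous_apply 0) continuous_const).inter <|
    (isClosed_eq (continuous_apply n) continuous_const).inter <|
    isClosed_iInter fun i ↦ isClosed_iInter fun _ ↦
      isClosed_le ((continuous_apply i).dist (continuous_apply (i + 1))) continuous_const

end StepChain

lemma image_Icc_natCast_subset {α : Type*} {f : ℝ → α} {S : Set α} (h0 : f 0 ∈ S) :
    ∀ n : ℕ, (∀ i < n, f '' Icc (i : ℝ) (i + 1) ⊆ S) → f '' Icc 0 (n : ℝ) ⊆ S
  | 0, _ => by simpa using h0
  | n + 1, h => by
    rw [Nat.cast_succ, ← Icc_union_Icc_eq_Icc n.cast_nonneg (le_add_of_nonneg_right zero_le_one),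
      image_union]
    exact union_subset (image_Icc_natCast_subset h0 n fun i hi ↦ h i (by omega))
      (h n n.lt_succ_self)

lemma eq_lineMap_of_sub_eq {E : Type*} [AddCommGroup E] [Module ℝ E] {n : ℕ} {q : ℕ → E}
    (h : ∀ j, j + 1 < n → q (j + 2) - q (j + 1) = q (j + 1) - q j) :
    ∀ i ≤ n, q i = AffineMap.lineMap (q 0) (q 1) (i : ℝ) := by
  have hstep : ∀ i < n, q (i + 1) - q i = q 1 - q 0 := by
    intro i hi
    induction i with
    | zero => rfl
    | succ i ih => rw [h i hi, ih (by omega)]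
  intro i hi
  induction i with
  | zero => simp
  | succ i ih =>
    rw [← sub_add_cancel (q (i + 1)) (q i), hstep i hi, ih (by omega),
      AffineMap.lineMap_apply_module', AffineMap.lineMap_apply_module']
    push_cast
    module

section Energy

variable {E : Type*} [NormedAddCommGroup E]

def chainEnergy (n : ℕ) (p : ℕ → E) : ℝ := ∑ i ∈ Finset.range n, ‖p (i + 1) - p i‖ ^ 2

lemma continuous_chainEnergy (n : ℕ) : Continuous (chainEnergy (E := E) n) :=
  continuous_finsetSum _ fun i _ ↦
    ((continuous_apply (i + 1)).sub (continuous_apply i)).norm.pow 2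

lemma chainEnergy_update_sub {n j : ℕ} (hj : j + 1 < n) (p : ℕ → E) (z : E) :
    chainEnergy n (Function.update p (j + 1) z) - chainEnergy n p =
      (‖z - p j‖ ^ 2 - ‖p (j + 1) - p j‖ ^ 2) +
        (‖p (j + 2) - z‖ ^ 2 - ‖p (j + 2) - p (j + 1)‖ ^ 2) := by
  rw [chainEnergy, chainEnergy, ← Finset.sum_sub_distrib,
    Finset.sum_eq_add_of_mem j (j + 1) (by simp; omega) (by simpa using hj) (by omega)]
  · simp
  · intro i _ ⟨hij, hij'⟩
    simp [hij, hij']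

end Energy

section Tietze

variable {E : Type*} [NormedAddCommGroup E] [InnerProductSpace ℝ E] {S : Set E} {ε δ : ℝ}
  {n : ℕ} {x y : E} {q : ℕ → E}

lemma IsStepChain.sub_eq_of_isMinOn (hconv : ∀ z ∈ S, Convex ℝ (S ∩ ball z ε)) (hδε : δ < ε)
    (hq : IsStepChain S δ n x y q)
    (hmin : IsMinOn (chainEnergy n) {p | IsStepChain S δ n x y p} q) {j : ℕ} (hj : j + 1 < n) :
    q (j + 2) - q (j + 1) = q (j + 1) - q j := by
  obtain ⟨hqS, hq0, hqn, hstep⟩ := hq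
  set a := q (j + 1) - q j
  set b := q (j + 2) - q (j + 1)
  have ha : ‖a‖ ≤ δ := by rw [← dist_eq_norm']; exact hstep j (by omega)
  have hb : ‖b‖ ≤ δ := by rw [← dist_eq_norm']; exact hstep (j + 1) hj
  set m := q j + (1 / 2 : ℝ) • (q (j + 2) - q j)
  have hm_left : m - q j = (1 / 2 : ℝ) • (a + b) := by simp only [m, a, b]; module
  have hm_right : q (j + 2) - m = (1 / 2 : ℝ) • (a + b) := by simp only [m, a, b]; module
  have hmS : m ∈ S := by
    refine ((hconv _ (hqS (j + 1))).add_smul_sub_mem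
      ⟨hqS j, mem_ball.2 ((hstep j (by omega)).trans_lt hδε)⟩
      ⟨hqS (j + 2), mem_ball'.2 ((hstep (j + 1) hj).trans_lt hδε)⟩
      ⟨by norm_num, by norm_num⟩).1
  have hhalf : ‖(1 / 2 : ℝ) • (a + b)‖ ≤ δ := by
    rw [norm_smul]
    have := norm_add_le a b
    norm_num
    linarith
  have hq' : IsStepChain S δ n x y (Function.update q (j + 1) m) := by
    refine ⟨fun i ↦ ?_, by simpa using hq0, by simpa [show n ≠ j + 1 by omega] using hqn,
      fun i hi ↦ ?_⟩
    · rcases eq_or_ne i (j + 1) with rfl | hi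
      · simpa using hmS
      · simpa [hi] using hqS i
    · rw [dist_eq_norm']
      rcases eq_or_ne i j with rfl | hij
      · simpa [hm_left] using hhalf
      rcases eq_or_ne i (j + 1) with rfl | hij'
      · simpa [hm_right] using hhalf
      · simpa [hij, hij', dist_eq_norm'] using hstep i hi
  -- minimality against the midpoint competitor, read through the parallelogram law
  have hle : 0 ≤ chainEnergy n (Function.update q (j + 1) m) - chainEnergy n q :=
    sub_nonneg.2 (hmin hq')
  rw [chainEnergy_update_sub hj, hm_left, hm_right, norm_smul] at hle
  have hpar := parallelogram_law_with_norm ℝ a b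
  have hab : ‖a - b‖ = 0 := by norm_num at hle; nlinarith [norm_nonneg (a - b)]
  exact (sub_eq_zero.1 (norm_eq_zero.1 hab)).symm

lemma IsStepChain.segment_subset_of_isMinOn (hconv : ∀ z ∈ S, Convex ℝ (S ∩ ball z ε))
    (hδε : δ < ε) (hq : IsStepChain S δ n x y q)
    (hmin : IsMinOn (chainEnergy n) {p | IsStepChain S δ n x y p} q) :
    segment ℝ x y ⊆ S := by
  have hline := eq_lineMap_of_sub_eq fun j hj ↦ hq.sub_eq_of_isMinOn hconv hδε hmin hj
  obtain ⟨hqS, rfl, rfl, hstep⟩ := hq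
  set L : ℝ →ᵃ[ℝ] E := AffineMap.lineMap (q 0) (q 1)
  calc segment ℝ (q 0) (q n) = L '' Icc 0 (n : ℝ) := by
        rw [← segment_eq_Icc n.cast_nonneg, image_segment, ← hline n le_rfl]; simp [L]
    _ ⊆ S := image_Icc_natCast_subset (by simpa [L] using hqS 0) n fun i hi ↦ by
        rw [← segment_eq_Icc (by linarith), image_segment, ← Nat.cast_succ, ← hline i hi.le,
          ← hline (i + 1) hi]
        have hε : 0 < ε := (dist_nonneg.trans (hstep i hi)).trans_lt hδε
        exact ((hconv (q i) (hqS i)).segment_subset ⟨hqS i, mem_ball_self hε⟩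
          ⟨hqS (i + 1), mem_ball'.2 ((hstep i hi).trans_lt hδε)⟩).trans inter_subset_left

theorem IsLocallyConvex.convex_of_isCompact_of_isPreconnected (hS : IsLocallyConvex ℝ S)
    (hc : IsCompact S) (hp : IsPreconnected S) : Convex ℝ S := by
  obtain ⟨ε, hε, hconv⟩ := hS.exists_forall_convex_inter_ball hc
  refine convex_iff_segment_subset.2 fun x hx y hy ↦ ?_
  obtain ⟨n, p, hp⟩ := hp.exists_isStepChain (half_pos hε) hx hy
  obtain ⟨q, hq, hmin⟩ := (isCompact_setOf_isStepChain hc).exists_isMinOn ⟨p, hp⟩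
    (continuous_chainEnergy n).continuousOn
  exact hq.segment_subset_of_isMinOn hconv (half_lt_self hε) hmin

end Tietze

theorem IsLocallyConvex.convex_of_isCompact_of_isPreconnected_of_finiteDimensional
    {V : Type*} [NormedAddCommGroup V] [NormedSpace ℝ V] [FiniteDimensional ℝ V] {S : Set V}
    (hS : IsLocallyConvex ℝ S) (hc : IsCompact S) (hp : IsPreconnected S) : Convex ℝ S := by
  let e := toEuclidean (E := V)
  have := (hS.image e).convex_of_isCompact_of_isPreconnected (hc.image e.continuous)
    (hp.image _ e.continuous.continuousOn)
  simpa [e.injective.preimage_image] using this.linear_preimage (e : V →ₗ[ℝ] _)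

lemma Convex.mem_extremePoints_of_mem_extremePoints_inter {E : Type*} [AddCommGroup E]
    [Module ℝ E] [TopologicalSpace E] [ContinuousAdd E] [ContinuousSMul ℝ E] {A U : Set E} {x : E}
    (hA : Convex ℝ A) (hU : U ∈ 𝓝 x) (hx : x ∈ (A ∩ U).extremePoints ℝ) :
    x ∈ A.extremePoints ℝ := by
  refine ⟨hx.1.1, fun x₁ h₁ x₂ h₂ ⟨a, b, ha, hb, hab, hxe⟩ ↦ ?_⟩
  -- a homothety centred at `x` with a small ratio `s` moves `x₁` and `x₂` into `U`
  have hshrink (z : E) : ∀ᶠ s in 𝓝 (0 : ℝ), x + s • (z - x) ∈ U :=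
    ((continuous_const.add (continuous_id.smul continuous_const)).tendsto' 0 x
      (by simp)).eventually hU
  obtain ⟨s, ⟨h₁U, h₂U⟩, hs⟩ := (((hshrink x₁).and (hshrink x₂)).filter_mono nhdsWithin_le_nhds
    |>.and (Ioo_mem_nhdsGT one_pos)).exists
  have hs' : s ∈ Icc (0 : ℝ) 1 := Ioo_subset_Icc_self hs
  have := hx.2 ⟨hA.add_smul_sub_mem hx.1.1 h₁ hs', h₁U⟩ ⟨hA.add_smul_sub_mem hx.1.1 h₂ hs', h₂U⟩
    ⟨a, b, ha, hb, hab, by linear_combination (norm := module) s • hxe + hab • ((1 - s) • x)⟩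
  simpa [hs.1.ne', sub_eq_zero] using this

section Polyhedron

variable {ι E : Type*} [AddCommGroup E] [Module ℝ E]

def polyhedron (f : ι → E →ᵃ[ℝ] ℝ) : Set E := {y | ∀ i, 0 ≤ f i y}

lemma convex_polyhedron (f : ι → E →ᵃ[ℝ] ℝ) : Convex ℝ (polyhedron f) := by
  rw [show polyhedron f = ⋂ i, f i ⁻¹' Ici 0 by ext; simp [polyhedron]]
  exact convex_iInter fun i ↦ (convex_Ici 0).affine_preimage (f i)

lemma eq_of_mem_extremePoints_polyhedron [Finite ι] {f : ι → E →ᵃ[ℝ] ℝ} {y y' : E}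
    (hy : y ∈ (polyhedron f).extremePoints ℝ) (h : ∀ i, f i y = 0 → f i y' = 0) : y' = y := by
  -- the constraints active at `y` vanish on the whole line, the others stay positive near `y`
  have hline : ∀ᶠ t in 𝓝 (0 : ℝ), AffineMap.lineMap y y' t ∈ polyhedron f := by
    refine eventually_all.2 fun i ↦ ?_
    rcases (hy.1 i).eq_or_lt with h0 | hpos
    · exact .of_forall fun t ↦ by simp [AffineMap.apply_lineMap, ← h0, h i h0.symm]
    · have hcont : Continuous fun t : ℝ ↦ f i (AffineMap.lineMap y y' t) :=
        ((f i).comp (AffineMap.lineMap y y')).continuous_of_finiteDimensional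
      exact ((hcont.tendsto' 0 _ (by simp)).eventually (lt_mem_nhds hpos)).mono fun _ ↦ le_of_lt
  obtain ⟨t, ⟨hpos, hneg⟩, ht⟩ := ((hline.and ((continuous_neg.tendsto' 0 0 neg_zero).eventually
    hline)).filter_mono nhdsWithin_le_nhds |>.and (eventually_mem_nhdsWithin (s := Ioi 0))).exists
  have hmid : y ∈ openSegment ℝ (AffineMap.lineMap y y' (-t)) (AffineMap.lineMap y y' t) :=
    ⟨1 / 2, 1 / 2, by norm_num, by norm_num, by norm_num, by
      simp only [AffineMap.lineMap_apply_module']; module⟩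
  exact (by simpa [(mem_Ioi.1 ht).ne'] using hy.2 hneg hpos hmid : y = y').symm

lemma finite_extremePoints_polyhedron [Finite ι] (f : ι → E →ᵃ[ℝ] ℝ) :
    ((polyhedron f).extremePoints ℝ).Finite :=
  Finite.of_finite_image (f := fun y ↦ {i | f i y = 0}) (toFinite _) fun _ _ _ hy' hyy' ↦
    eq_of_mem_extremePoints_polyhedron hy' fun i hi ↦ (Set.ext_iff.1 hyy' i).2 hi

end Polyhedron

section LocallyPolyhedral

variable {V : Type*} [AddCommGroup V] [Module ℝ V] [TopologicalSpace V] {P : Set V}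

def IsLocallyPolyhedral (P : Set V) : Prop :=
  ∀ x ∈ P, ∃ U ∈ 𝓝 x, ∃ (n : ℕ) (f : Fin n → (V →ᵃ[ℝ] ℝ)), P ∩ U = polyhedron f ∩ U

lemma IsLocallyPolyhedral.isLocallyConvex [LocallyConvexSpace ℝ V]
    (hP : IsLocallyPolyhedral P) : IsLocallyConvex ℝ P := by
  intro x hx
  obtain ⟨U, hU, n, f, hPU⟩ := hP x hx
  obtain ⟨W, hW, hWconv, hWU⟩ := (locallyConvexSpace_iff_exists_convex_subset ℝ V).1 ‹_› x U hU
  refine ⟨W, hW, ?_⟩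
  rw [← inter_eq_right.2 hWU, ← inter_assoc, hPU, inter_assoc, inter_eq_right.2 hWU]
  exact (convex_polyhedron f).inter hWconv

lemma IsLocallyPolyhedral.finite_extremePoints [ContinuousAdd V] [ContinuousSMul ℝ V]
    (hP : IsLocallyPolyhedral P) (hc : IsCompact P) : (P.extremePoints ℝ).Finite := by
  choose U hU n f hPU using hP
  have hlocal : ∀ x hx, P.extremePoints ℝ ∩ interior (U x hx) ⊆
      (polyhedron (f x hx)).extremePoints ℝ := by
    rintro x hx y ⟨hy, hyU⟩
    have : y ∈ (polyhedron (f x hx) ∩ U x hx).extremePoints ℝ := hPU x hx ▸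
      inter_extremePoints_subset_extremePoints_of_subset inter_subset_left
        ⟨⟨hy.1, interior_subset hyU⟩, hy⟩
    exact (convex_polyhedron _).mem_extremePoints_of_mem_extremePoints_inter
      (mem_interior_iff_mem_nhds.1 hyU) this
  obtain ⟨t, ht⟩ := hc.elim_nhds_subcover' (fun x hx ↦ interior (U x hx))
    fun x hx ↦ interior_mem_nhds.2 (hU x hx)
  refine (t.finite_toSet.biUnion fun x _ ↦ finite_extremePoints_polyhedron (f x x.2)).subset
    fun y hy ↦ ?_
  obtain ⟨x, hxt, hyx⟩ := mem_iUnion₂.1 (ht (extremePoints_subset hy))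
  exact mem_iUnion₂.2 ⟨x, hxt, hlocal x x.2 ⟨hy, hyx⟩⟩

end LocallyPolyhedral

/-- A locally polyhedral, compact, connected subset of a
finite-dimensional real affine space (modeled as a vector space) is a polytope,
i.e. the convex hull of finitely many points. -/
theorem locallyPolyhedral_compact_connected_isPolytope
    {V : Type*} [NormedAddCommGroup V] [NormedSpace ℝ V] [FiniteDimensional ℝ V]
    (P : Set V)
    (hloc : ∀ x ∈ P, ∃ U ∈ nhds x, ∃ (n : ℕ) (f : Fin n → (V →ᵃ[ℝ] ℝ)),
      P ∩ U = {y : V | ∀ i, 0 ≤ f i y} ∩ U)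
    (hcomp : IsCompact P) (hconn : IsConnected P) :
    ∃ S : Finset V, P = convexHull ℝ (S : Set V) := by
  have hpoly : IsLocallyPolyhedral P := hloc
  have hconv : Convex ℝ P :=
    hpoly.isLocallyConvex.convex_of_isCompact_of_isPreconnected_of_finiteDimensional hcomp
      hconn.isPreconnected
  have hfin : (P.extremePoints ℝ).Finite := hpoly.finite_extremePoints hcomp
  refine ⟨hfin.toFinset, ?_⟩
  rw [hfin.coe_toFinset, ← (hfin.isCompact_convexHull ℝ).isClosed.closure_eq,
    closure_convexHull_extremePoints hcomp hconv]
end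

section
/- Let P be a locally convex subset of a finite-dimensional real affine space and let I ⊆ P be an open line segment (open interval). Then the tangent cone C_a P := ℝ_{≥0}·(P∩U − a), where P∩U is a convex neighborhood of a in P, is the same for all a ∈ I. -/
/-!
At a point `c` with a convex neighbourhood `N` in `P`, the cone generated by `N - c` is the set
of feasible directions of `P` at `c`, i.e. the `d` with `c + s • d ∈ P` for all small `s > 0`;
in particular it does not depend on `N`. If two points `c, c'` of the segment share a convex
neighbourhood `N`, then `c' - c` is a feasible direction at `c'` (the segment is open), so
`p - c = (p - c') + (c' - c)` lies in the convex cone at `c'`; by symmetry the cones agree. Hence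
the cone is locally constant along the segment, and the segment is connected.
-/

open Filter Set Topology

section

variable {V : Type*} [AddCommGroup V] [Module ℝ V]

def coneAt (N : Set V) (c : V) : Set V :=
  {v | ∃ t : ℝ, 0 ≤ t ∧ ∃ p ∈ N, v = t • (p - c)}

theorem sub_mem_coneAt {N : Set V} {c p : V} (hp : p ∈ N) : p - c ∈ coneAt N c :=
  ⟨1, zero_le_one, p, hp, (one_smul ℝ _).symm⟩

theorem smul_mem_coneAt {N : Set V} {c v : V} {t : ℝ} (ht : 0 ≤ t) (hv : v ∈ coneAt N c) :
    t • v ∈ coneAt N c := by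
  obtain ⟨s, hs, p, hp, rfl⟩ := hv
  exact ⟨t * s, mul_nonneg ht hs, p, hp, (mul_smul t s _).symm⟩

theorem add_mem_coneAt {N : Set V} (hN : Convex ℝ N) {c u v : V}
    (hu : u ∈ coneAt N c) (hv : v ∈ coneAt N c) : u + v ∈ coneAt N c := by
  obtain ⟨s, hs, p, hp, rfl⟩ := hu
  obtain ⟨t, ht, q, hq, rfl⟩ := hv
  rcases (add_nonneg hs ht).eq_or_lt with h | h
  · obtain ⟨rfl, rfl⟩ : s = 0 ∧ t = 0 := ⟨by linarith, by linarith⟩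
    exact ⟨0, le_rfl, p, hp, by simp⟩
  · have hs' : (s + t) * (s / (s + t)) = s := by field_simp
    have ht' : (s + t) * (t / (s + t)) = t := by field_simp
    refine ⟨s + t, h.le, (s / (s + t)) • p + (t / (s + t)) • q,
      hN hp hq (by positivity) (by positivity) (by field_simp), ?_⟩
    rw [smul_sub (s + t), smul_add, smul_smul, smul_smul, hs', ht', add_smul]
    simp only [smul_sub]
    abel

theorem coneAt_subset_coneAt {N : Set V} (hN : Convex ℝ N) {c c' : V}
    (h : c' - c ∈ coneAt N c') : coneAt N c ⊆ coneAt N c' := by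
  rintro _ ⟨t, ht, p, hp, rfl⟩
  rw [← sub_add_sub_cancel p c' c, smul_add]
  exact add_mem_coneAt hN (smul_mem_coneAt ht (sub_mem_coneAt hp)) (smul_mem_coneAt ht h)

def feasibleDirections (P : Set V) (c : V) : Set V :=
  {d | ∀ᶠ s : ℝ in 𝓝[>] 0, c + s • d ∈ P}

theorem mem_feasibleDirections {P : Set V} {c d : V} :
    d ∈ feasibleDirections P c ↔ ∀ᶠ s : ℝ in 𝓝[>] 0, c + s • d ∈ P :=
  Iff.rfl

theorem feasibleDirections_mono {P Q : Set V} (h : P ⊆ Q) (c : V) :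
    feasibleDirections P c ⊆ feasibleDirections Q c :=
  fun _ hd ↦ (mem_feasibleDirections.1 hd).mono fun _ hs ↦ h hs

theorem coneAt_subset_feasibleDirections {P N : Set V} {c : V} (hN : Convex ℝ N)
    (hNP : N ⊆ P) (hc : c ∈ N) : coneAt N c ⊆ feasibleDirections P c := by
  rintro _ ⟨t, ht, p, hp, rfl⟩
  have hst : ∀ᶠ s : ℝ in 𝓝[>] 0, s * t ≤ 1 :=
    (((continuous_mul_const t).tendsto' 0 0 (zero_mul t)).mono_left
      nhdsWithin_le_nhds).eventually (eventually_le_nhds one_pos)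
  filter_upwards [hst, self_mem_nhdsWithin] with s hs (hs0 : 0 < s)
  have hcomb : c + s • t • (p - c) = (1 - s * t) • c + (s * t) • p := by
    rw [smul_smul, smul_sub, sub_smul, one_smul]; abel
  rw [hcomb]
  exact hNP (hN hc hp (by linarith) (by positivity) (by ring))

theorem sub_mem_feasibleDirections_openSegment {x y c c' : V}
    (hc : c ∈ openSegment ℝ x y) (hc' : c' ∈ openSegment ℝ x y) :
    c' - c ∈ feasibleDirections (openSegment ℝ x y) c' := by
  rw [openSegment_eq_image'] at hc hc' ⊢
  obtain ⟨θ, -, rfl⟩ := hc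
  obtain ⟨θ', hθ', rfl⟩ := hc'
  have hnear : ∀ᶠ s : ℝ in 𝓝[>] 0, θ' + s * (θ' - θ) ∈ Ioo (0 : ℝ) 1 := by
    refine (((continuous_const.add (continuous_mul_const _)).tendsto' 0 θ' ?_).mono_left
      nhdsWithin_le_nhds).eventually (isOpen_Ioo.mem_nhds hθ')
    simp
  filter_upwards [hnear] with s hs
  refine ⟨θ' + s * (θ' - θ), hs, ?_⟩
  simp only [add_smul, mul_smul, sub_smul, smul_sub, smul_add]
  abel

variable [TopologicalSpace V] [IsTopologicalAddGroup V] [ContinuousSMul ℝ V]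

theorem feasibleDirections_subset_coneAt {P N : Set V} {c : V} (hN : N ∈ 𝓝[P] c) :
    feasibleDirections P c ⊆ coneAt N c := by
  intro d hd
  have hnear : ∀ᶠ s : ℝ in 𝓝[>] 0, c + s • d ∈ N := by
    refine (tendsto_nhdsWithin_iff.2 ⟨?_, mem_feasibleDirections.1 hd⟩).eventually hN
    have : Continuous fun s : ℝ ↦ c + s • d := by fun_prop
    exact (this.tendsto' 0 c (by simp)).mono_left nhdsWithin_le_nhds
  obtain ⟨s, hsN, hs0 : 0 < s⟩ := (hnear.and self_mem_nhdsWithin).exists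
  refine ⟨s⁻¹, inv_nonneg.2 hs0.le, c + s • d, hsN, ?_⟩
  rw [add_sub_cancel_left, smul_smul, inv_mul_cancel₀ hs0.ne', one_smul]

theorem coneAt_eq_feasibleDirections {P N : Set V} {c : V} (hc : c ∈ P) (hN : Convex ℝ N)
    (hNP : N ⊆ P) (hNc : N ∈ 𝓝[P] c) : coneAt N c = feasibleDirections P c :=
  (coneAt_subset_feasibleDirections hN hNP (mem_of_mem_nhdsWithin hc hNc)).antisymm
    (feasibleDirections_subset_coneAt hNc)

theorem feasibleDirections_eq_of_mem_nhdsWithin {P N : Set V} {c c' : V} (hc : c ∈ P)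
    (hc' : c' ∈ P) (hN : Convex ℝ N) (hNP : N ⊆ P) (hNc : N ∈ 𝓝[P] c) (hNc' : N ∈ 𝓝[P] c')
    (hcc' : c' - c ∈ feasibleDirections P c') (hc'c : c - c' ∈ feasibleDirections P c) :
    feasibleDirections P c = feasibleDirections P c' := by
  rw [← coneAt_eq_feasibleDirections hc hN hNP hNc] at hc'c ⊢
  rw [← coneAt_eq_feasibleDirections hc' hN hNP hNc'] at hcc' ⊢
  exact (coneAt_subset_coneAt hN hcc').antisymm (coneAt_subset_coneAt hN hc'c)

theorem feasibleDirections_eq_of_mem_openSegment {P : Set V} {x y a b : V}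
    (hI : openSegment ℝ x y ⊆ P)
    (hloc : ∀ c ∈ openSegment ℝ x y, ∃ N : Set V, N ⊆ P ∧ Convex ℝ N ∧ N ∈ 𝓝[P] c)
    (ha : a ∈ openSegment ℝ x y) (hb : b ∈ openSegment ℝ x y) :
    feasibleDirections P a = feasibleDirections P b := by
  have hseg {u v : V} (hu : u ∈ openSegment ℝ x y) (hv : v ∈ openSegment ℝ x y) :
      v - u ∈ feasibleDirections P v :=
    feasibleDirections_mono hI v (sub_mem_feasibleDirections_openSegment hu hv)
  refine (convex_openSegment x y).isPreconnected.induction₂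
    (fun c c' ↦ feasibleDirections P c = feasibleDirections P c') (fun c hc ↦ ?_)
    (fun _ _ _ _ _ _ ↦ Eq.trans) (fun _ _ _ _ ↦ Eq.symm) ha hb
  obtain ⟨N, hNP, hN, hNc⟩ := hloc c hc
  have hnear : ∀ᶠ c' in 𝓝[openSegment ℝ x y] c, N ∈ 𝓝[P] c' :=
    (eventually_mem_nhdsWithin_iff.2 hNc).filter_mono (nhdsWithin_mono c hI)
  filter_upwards [hnear, self_mem_nhdsWithin] with c' hNc' hc'
  exact feasibleDirections_eq_of_mem_nhdsWithin (hI hc) (hI hc') hN hNP hNc hNc'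
    (hseg hc hc') (hseg hc' hc)

end

theorem tangentCone_constant_on_open_segment_general
    {V : Type*} [NormedAddCommGroup V] [NormedSpace ℝ V]
    (P : Set V)
    (hloc : ∀ x ∈ P, ∃ N : Set V, N ⊆ P ∧ Convex ℝ N ∧ N ∈ nhdsWithin x P)
    (x y : V) (hI : openSegment ℝ x y ⊆ P)
    (a b : V) (ha : a ∈ openSegment ℝ x y) (hb : b ∈ openSegment ℝ x y)
    (Na Nb : Set V)
    (hNaP : Na ⊆ P) (hNaConv : Convex ℝ Na) (hNa : Na ∈ nhdsWithin a P)
    (hNbP : Nb ⊆ P) (hNbConv : Convex ℝ Nb) (hNb : Nb ∈ nhdsWithin b P) :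
    {v : V | ∃ t : ℝ, 0 ≤ t ∧ ∃ p ∈ Na, v = t • (p - a)} =
      {v : V | ∃ t : ℝ, 0 ≤ t ∧ ∃ p ∈ Nb, v = t • (p - b)} := by
  change coneAt Na a = coneAt Nb b
  rw [coneAt_eq_feasibleDirections (hI ha) hNaConv hNaP hNa,
    coneAt_eq_feasibleDirections (hI hb) hNbConv hNbP hNb]
  exact feasibleDirections_eq_of_mem_openSegment hI (fun c hc ↦ hloc c (hI hc)) ha hb

/-- If `P` is a locally convex subset of a finite-dimensional real
affine space and `I ⊆ P` is an open line segment, then the tangent cone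
`C_a P = ℝ≥0 • ((P ∩ U) - a)` (computed from any convex neighborhood `P ∩ U` of
`a` in `P`) is the same for all `a ∈ I`. -/
theorem tangentCone_constant_on_open_segment
    {V : Type*} [NormedAddCommGroup V] [NormedSpace ℝ V] [FiniteDimensional ℝ V]
    (P : Set V)
    (hloc : ∀ x ∈ P, ∃ N : Set V, N ⊆ P ∧ Convex ℝ N ∧ N ∈ nhdsWithin x P)
    (x y : V) (hI : openSegment ℝ x y ⊆ P)
    (a b : V) (ha : a ∈ openSegment ℝ x y) (hb : b ∈ openSegment ℝ x y)
    (Na Nb : Set V)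
    (hNaP : Na ⊆ P) (hNaConv : Convex ℝ Na) (hNa : Na ∈ nhdsWithin a P)
    (hNbP : Nb ⊆ P) (hNbConv : Convex ℝ Nb) (hNb : Nb ∈ nhdsWithin b P) :
    {v : V | ∃ t : ℝ, 0 ≤ t ∧ ∃ p ∈ Na, v = t • (p - a)} =
      {v : V | ∃ t : ℝ, 0 ≤ t ∧ ∃ p ∈ Nb, v = t • (p - b)} :=
  tangentCone_constant_on_open_segment_general P hloc x y hI a b ha hb Na Nb hNaP hNaConv hNa hNbP
    hNbConv hNb
end

section
/- Let Φ be an affine root system on a Euclidean affine space 𝔞. For any point x ∈ 𝔞, the set Φ_x = {α ∈ Φ : α(x) = 0} is a finite root system (in particular it is finite). -/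
open RealInnerProductSpace

/-- An affine linear function on the Euclidean space `V` is encoded as a pair
`α = (ᾱ, c) ∈ V × ℝ`, representing `x ↦ ⟪ᾱ, x⟫ + c`; `ᾱ` is its gradient. -/
noncomputable def affEval {V : Type*} [NormedAddCommGroup V] [InnerProductSpace ℝ V]
    (α : V × ℝ) (x : V) : ℝ :=
  ⟪α.1, x⟫ + α.2

/-- An affine root system: a set of non-constant affine functions such that
(a) `ℝα ∩ Φ = {α, -α}` for all `α ∈ Φ`, (b) `⟪ᾱ, β̄^∨⟫ ∈ ℤ` for all `α, β ∈ Φ`,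
(c) `s_α(Φ) = Φ` (where `s_α` acts by `β ↦ β - ⟪β̄, ᾱ^∨⟫ • α`), and
(d) the set of gradients `Φ̄` is finite. -/
def IsAffineRootSystem {V : Type*} [NormedAddCommGroup V] [InnerProductSpace ℝ V]
    (Φ : Set (V × ℝ)) : Prop :=
  (∀ α ∈ Φ, α.1 ≠ 0) ∧
  (∀ α ∈ Φ, -α ∈ Φ ∧ ∀ t : ℝ, t • α ∈ Φ → t • α = α ∨ t • α = -α) ∧
  (∀ α ∈ Φ, ∀ β ∈ Φ, ∃ k : ℤ, ⟪α.1, (2 / ‖β.1‖ ^ 2) • β.1⟫ = (k : ℝ)) ∧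
  (∀ α ∈ Φ, ∀ β ∈ Φ, β - ⟪β.1, (2 / ‖α.1‖ ^ 2) • α.1⟫ • α ∈ Φ) ∧
  (Prod.fst '' Φ).Finite

/-
Evaluation at a point is linear in the affine function, so `Φ_x` is stable under negation and
under every reflection `s_α` with `α ∈ Φ_x`; the remaining axioms pass to subsets. Finiteness holds
because an affine function vanishing at `x` is determined by its gradient, and there are only
finitely many gradients.
-/

section

variable {V : Type*} [NormedAddCommGroup V] [InnerProductSpace ℝ V]

theorem affEval_neg (α : V × ℝ) (x : V) : affEval (-α) x = -affEval α x := by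
  simp only [affEval, Prod.fst_neg, Prod.snd_neg, inner_neg_left]
  ring

theorem affEval_sub (α β : V × ℝ) (x : V) : affEval (α - β) x = affEval α x - affEval β x := by
  simp only [affEval, Prod.fst_sub, Prod.snd_sub, inner_sub_left]
  ring

theorem affEval_smul (c : ℝ) (α : V × ℝ) (x : V) : affEval (c • α) x = c * affEval α x := by
  simp only [affEval, Prod.smul_fst, Prod.smul_snd, inner_smul_left, smul_eq_mul,
    RCLike.conj_to_real]
  ring

theorem injOn_fst_setOf_affEval_eq_zero (x : V) :
    Set.InjOn Prod.fst {α : V × ℝ | affEval α x = 0} := by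
  intro α hα β hβ hfst
  simp only [Set.mem_ofPred_eq, affEval] at hα hβ
  refine Prod.ext hfst ?_
  rw [hfst] at hα
  linarith

theorem IsAffineRootSystem.of_subset {Φ Ψ : Set (V × ℝ)} (hΦ : IsAffineRootSystem Φ)
    (hΨΦ : Ψ ⊆ Φ) (hneg : ∀ α ∈ Ψ, -α ∈ Ψ)
    (hrefl : ∀ α ∈ Ψ, ∀ β ∈ Ψ, β - ⟪β.1, (2 / ‖α.1‖ ^ 2) • α.1⟫ • α ∈ Ψ) :
    IsAffineRootSystem Ψ := by
  obtain ⟨hnonconst, hreduced, hint, -, hfin⟩ := hΦ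
  exact ⟨fun α hα => hnonconst α (hΨΦ hα),
    fun α hα => ⟨hneg α hα, fun t ht => (hreduced α (hΨΦ hα)).2 t (hΨΦ ht)⟩,
    fun α hα β hβ => hint α (hΨΦ hα) β (hΨΦ hβ), hrefl,
    hfin.subset (Set.image_mono hΨΦ)⟩

end

/-- For an affine root system `Φ` and any point `x`, the subsystem
`Φ_x = {α ∈ Φ : α(x) = 0}` is a finite root system; in particular it is finite. -/
theorem affineRootSystem_vanishing_at_point_finite
    {V : Type*} [NormedAddCommGroup V] [InnerProductSpace ℝ V]
    (Φ : Set (V × ℝ)) (hΦ : IsAffineRootSystem Φ) (x : V) :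
    {α ∈ Φ | affEval α x = 0}.Finite ∧
      IsAffineRootSystem {α ∈ Φ | affEval α x = 0} := by
  obtain ⟨-, hreduced, -, hrefl, hfin⟩ := id hΦ
  have hsub : {α ∈ Φ | affEval α x = 0} ⊆ Φ := Set.sep_subset Φ _
  refine ⟨?_, hΦ.of_subset hsub ?_ ?_⟩
  · exact (hfin.subset (Set.image_mono hsub)).of_finite_image
      ((injOn_fst_setOf_affEval_eq_zero x).mono fun α hα => hα.2)
  · rintro α ⟨hα, hαx⟩
    exact ⟨(hreduced α hα).1, by rw [affEval_neg, hαx, neg_zero]⟩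
  · rintro α ⟨hα, hαx⟩ β ⟨hβ, hβx⟩
    exact ⟨hrefl α hα β hβ, by rw [affEval_sub, affEval_smul, hαx, hβx, mul_zero, sub_zero]⟩
end

section
/- Let W be a group of isometries of a Euclidean affine space 𝔞 and P ⊆ 𝔞 a convex subset such that every W-orbit meets P in at most one point. Let s ∈ W be a reflection with fixed hyperplane H = {α = 0}. If the interior P⁰ of P is nonempty, then H does not meet P⁰; consequently P lies entirely in one of the two closed half-spaces determined by H. -/
/-!
If `α = ⟪g, ·⟫ + c` vanished at an interior point `x` of `P`, then `x ± t • g` would lie in `P`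
for small `t > 0` and be swapped by `s`, giving two points of `P` in one `W`-orbit. So `α` has no
zero on the interior of `P`, which is convex, hence connected; `α` thus has constant sign there,
and this sign passes to `P ⊆ closure (interior P)`.
-/

open RealInnerProductSpace Filter Topology

theorem IsPreconnected.nonneg_or_nonpos_of_ne_zero {X : Type*} [TopologicalSpace X] {S : Set X}
    (hS : IsPreconnected S) {f : X → ℝ} (hf : ContinuousOn f S) (hne : ∀ x ∈ S, f x ≠ 0) :
    (∀ x ∈ S, 0 ≤ f x) ∨ (∀ x ∈ S, f x ≤ 0) := by
  by_contra! ⟨⟨a, ha, hfa⟩, ⟨b, hb, hfb⟩⟩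
  obtain ⟨z, hz, hfz⟩ := hS.intermediate_value ha hb hf ⟨hfa.le, hfb.le⟩
  exact hne z hz hfz

theorem Convex.nonneg_or_nonpos_of_ne_zero_on_interior {E : Type*} [AddCommGroup E] [Module ℝ E]
    [TopologicalSpace E] [IsTopologicalAddGroup E] [ContinuousSMul ℝ E] {P : Set E}
    (hP : Convex ℝ P) (hint : (interior P).Nonempty) {f : E → ℝ} (hf : Continuous f)
    (hne : ∀ x ∈ interior P, f x ≠ 0) : (∀ x ∈ P, 0 ≤ f x) ∨ (∀ x ∈ P, f x ≤ 0) := by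
  have hP_sub : P ⊆ closure (interior P) :=
    (hP.closure_interior_eq_closure_of_nonempty_interior hint).symm ▸ subset_closure
  refine (hP.interior.isPreconnected.nonneg_or_nonpos_of_ne_zero hf.continuousOn hne).imp
    (fun h ↦ ?_) (fun h ↦ ?_)
  · exact hP_sub.trans (closure_minimal h (isClosed_le continuous_const hf))
  · exact hP_sub.trans (closure_minimal h (isClosed_le hf continuous_const))

section Reflection

variable {V : Type*} [NormedAddCommGroup V] [InnerProductSpace ℝ V] {s : V → V} {g : V} {c : ℝ}

theorem reflection_apply_add_smul_of_mem_hyperplane (hg : g ≠ 0)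
    (hrefl : ∀ x : V, s x = x - (⟪g, x⟫ + c) • ((2 / ‖g‖ ^ 2) • g)) {x : V}
    (hx : ⟪g, x⟫ + c = 0) (t : ℝ) : s (x + t • g) = x - t • g := by
  have hg2 : ‖g‖ ^ 2 ≠ 0 := by positivity
  have hαt : ⟪g, x + t • g⟫ + c = t * ‖g‖ ^ 2 := by
    rw [inner_add_right, real_inner_smul_right, real_inner_self_eq_norm_sq]
    linarith
  rw [hrefl, hαt, smul_smul, mul_assoc, mul_div_cancel₀ _ hg2]
  module

theorem inner_add_const_ne_zero_of_mem_interior {P : Set V}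
    (hP : ∀ x ∈ P, ∀ y ∈ P, s x = y → x = y) (hg : g ≠ 0)
    (hrefl : ∀ x : V, s x = x - (⟪g, x⟫ + c) • ((2 / ‖g‖ ^ 2) • g)) {x : V}
    (hx : x ∈ interior P) : ⟪g, x⟫ + c ≠ 0 := by
  intro hαx
  have hnear : ∀ᶠ t in 𝓝 (0 : ℝ), x + t • g ∈ P :=
    ((by fun_prop : Continuous fun t : ℝ ↦ x + t • g).tendsto' 0 x (by simp)).eventually
      (mem_interior_iff_mem_nhds.mp hx)
  have hboth : ∀ᶠ t in 𝓝[>] (0 : ℝ), (x + t • g ∈ P ∧ x + (-t) • g ∈ P) ∧ 0 < t :=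
    ((hnear.and ((continuous_neg.tendsto' 0 0 neg_zero).eventually hnear)).filter_mono
      nhdsWithin_le_nhds).and self_mem_nhdsWithin
  obtain ⟨t, ⟨htP, hnegtP⟩, ht⟩ := hboth.exists
  have hswap : s (x + t • g) = x + (-t) • g := by
    rw [reflection_apply_add_smul_of_mem_hyperplane hg hrefl hαx, neg_smul, sub_eq_add_neg]
  have h2t : (2 * t) • g = 0 := by
    rw [← sub_eq_zero.mpr (hP _ htP _ hnegtP hswap)]
    module
  exact hg ((smul_eq_zero.mp h2t).resolve_left (by positivity))

end Reflection

theorem reflection_hyperplane_avoids_interior_general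
    {V : Type*} [NormedAddCommGroup V] [InnerProductSpace ℝ V]
    (W : Subgroup (V ≃ᵢ V)) (P : Set V) (hP : Convex ℝ P)
    (horbit : ∀ w ∈ W, ∀ x ∈ P, ∀ y ∈ P, w x = y → x = y)
    (s : V ≃ᵢ V) (hs : s ∈ W) (g : V) (hg : g ≠ 0) (c : ℝ)
    (hrefl : ∀ x : V, s x = x - (⟪g, x⟫ + c) • ((2 / ‖g‖ ^ 2) • g))
    (hint : (interior P).Nonempty) :
    (∀ x ∈ interior P, ⟪g, x⟫ + c ≠ 0) ∧
      ((∀ x ∈ P, 0 ≤ ⟪g, x⟫ + c) ∨ (∀ x ∈ P, ⟪g, x⟫ + c ≤ 0)) := by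
  have hα : ∀ x ∈ interior P, ⟪g, x⟫ + c ≠ 0 := fun x hx ↦
    inner_add_const_ne_zero_of_mem_interior (horbit s hs) hg hrefl hx
  exact ⟨hα, hP.nonneg_or_nonpos_of_ne_zero_on_interior hint (by fun_prop) hα⟩

/-- Let `W` be a group of isometries of a Euclidean space and `P` a convex
subset such that every `W`-orbit meets `P` in at most one point.  Let `s ∈ W` be a
reflection with fixed hyperplane `H = {x : α(x) = 0}`, where `α(x) = ⟪g, x⟫ + c` is
non-constant.  If the interior of `P` is nonempty, then `H` does not meet the interior
of `P`, and consequently `P` lies entirely in one of the two closed half-spaces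
determined by `H`. -/
theorem reflection_hyperplane_avoids_interior
    {V : Type*} [NormedAddCommGroup V] [InnerProductSpace ℝ V] [FiniteDimensional ℝ V]
    (W : Subgroup (V ≃ᵢ V)) (P : Set V) (hP : Convex ℝ P)
    (horbit : ∀ w ∈ W, ∀ x ∈ P, ∀ y ∈ P, w x = y → x = y)
    (s : V ≃ᵢ V) (hs : s ∈ W) (g : V) (hg : g ≠ 0) (c : ℝ)
    (hrefl : ∀ x : V, s x = x - (⟪g, x⟫ + c) • ((2 / ‖g‖ ^ 2) • g))
    (hint : (interior P).Nonempty) :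
    (∀ x ∈ interior P, ⟪g, x⟫ + c ≠ 0) ∧
      ((∀ x ∈ P, 0 ≤ ⟪g, x⟫ + c) ∨ (∀ x ∈ P, ⟪g, x⟫ + c ≤ 0)) :=
  reflection_hyperplane_avoids_interior_general W P hP horbit s hs g hg c hrefl hint
end

section
/- Let W be an affine Weyl group with set of simple reflections Σ (with respect to an alcove), Λ a W-invariant weight lattice, and for s ∈ Σ let π_s be the primitive affine function vanishing on the wall of s. Call s ∈ Σ ambiguous if ⟨Λ, π̄_s^∨⟩ = 2ℤ. If s ∈ Σ is ambiguous and t ∈ Σ is W-conjugate to s, then s = t. -/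
/-!
Write `π_u = ⟪g u, ·⟫ + c u` and let `C` be the connected component of `s` in the Coxeter
graph. For a simple reflection `r` and an integral combination `f = ∑ n_u π_u` over `C`, one has
`f ∘ r = f - ⟪∑ n_u g u, coroot (g r)⟫ π_r`, and this coefficient is an integer, vanishes when
`r ∉ C`, and is even when `r = s` because `∑ n_u g u ∈ Λ` and `s` is ambiguous. So for every
`w ∈ W`, `π_s ∘ w` is an integral combination over `C` with odd coefficient at `s`. If
`w s w⁻¹ = t`, then `π_s ∘ w⁻¹` is a nonzero multiple of `π_t`; comparing gradients puts `t` in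
`C`. The `π_u`, `u ∈ C`, are linearly independent (their gradients are pairwise obtuse, they are
positive on a common chamber, and `C` is connected), so the coefficient of `π_s` in a multiple
of `π_t` vanishes unless `s = t`.
-/

open RealInnerProductSpace Finsupp

section

variable {V : Type*} [NormedAddCommGroup V] [InnerProductSpace ℝ V] {ι : Type*}

noncomputable def coroot (a : V) : V := (2 / ‖a‖ ^ 2) • a

lemma inner_coroot_self {a : V} (ha : a ≠ 0) : ⟪a, coroot a⟫ = 2 := by
  have : ‖a‖ ≠ 0 := norm_ne_zero_iff.mpr ha
  rw [coroot, real_inner_smul_right, real_inner_self_eq_norm_sq]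
  field_simp

lemma coroot_ne_zero {a : V} (ha : a ≠ 0) : coroot a ≠ 0 := by
  have : ‖a‖ ≠ 0 := norm_ne_zero_iff.mpr ha
  exact smul_ne_zero (by positivity) ha

def IsAffineReflection (r : V → V) (a : V) (b : ℝ) : Prop :=
  ∀ x, r x = x - (⟪a, x⟫ + b) • coroot a

namespace IsAffineReflection

variable {r : V → V} {a : V} {b : ℝ}

lemma inner_apply (hr : IsAffineReflection r a b) (v x : V) :
    ⟪v, r x⟫ = ⟪v, x⟫ - ⟪v, coroot a⟫ * (⟪a, x⟫ + b) := by
  rw [hr, inner_sub_right, real_inner_smul_right, mul_comm]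

lemma apply_apply (hr : IsAffineReflection r a b) (ha : a ≠ 0) (x : V) : r (r x) = x := by
  rw [hr (r x), hr.inner_apply, inner_coroot_self ha, hr x]
  module

lemma inv_eq_self {r : V ≃ᵢ V} (hr : IsAffineReflection r a b) (ha : a ≠ 0) : r⁻¹ = r :=
  inv_eq_of_mul_eq_one_right <| IsometryEquiv.ext (hr.apply_apply ha)

end IsAffineReflection

lemma exists_ne_zero_forall_eq_mul_of_smul_eq_smul {X : Type*} {φ ψ : X → ℝ} {u u' : V}
    (hu : u ≠ 0) (hu' : u' ≠ 0) {x₁ : X} (hx₁ : ψ x₁ ≠ 0) (h : ∀ x, φ x • u = ψ x • u') :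
    ∃ μ ≠ 0, ∀ x, φ x = μ * ψ x := by
  have hu'_eq : u' = (φ x₁ / ψ x₁) • u := by
    rw [div_eq_inv_mul, mul_smul, h x₁, inv_smul_smul₀ hx₁]
  refine ⟨φ x₁ / ψ x₁, fun h0 => hu' (by rw [hu'_eq, h0, zero_smul]), fun x => ?_⟩
  apply smul_left_injective ℝ hu
  simp only [h x, hu'_eq, smul_smul, mul_comm]

lemma IsAffineReflection.exists_comp_inv_eq_mul {s t w : V ≃ᵢ V} {a a' : V} {b b' : ℝ}
    (hs : IsAffineReflection s a b) (ht : IsAffineReflection t a' b') (ha : a ≠ 0)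
    (ha' : a' ≠ 0) (hwt : w * s * w⁻¹ = t) {x₁ : V} (hx₁ : ⟪a', x₁⟫ + b' ≠ 0) :
    ∃ μ ≠ 0, ∀ x, ⟪a, w⁻¹ x⟫ + b = μ * (⟪a', x⟫ + b') := by
  set A := w.toRealAffineIsometryEquiv.linearIsometryEquiv
  have hw : ∀ y v, w (v + y) = A v + w y := fun y v =>
    w.toRealAffineIsometryEquiv.map_vadd y v
  refine exists_ne_zero_forall_eq_mul_of_smul_eq_smul
    (A.map_ne_zero_iff.mpr (coroot_ne_zero ha)) (coroot_ne_zero ha') hx₁ fun x => ?_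
  have h := congrArg (· x) hwt
  simp only [IsometryEquiv.mul_apply] at h
  rw [ht x, hs, sub_eq_neg_add, hw, ← neg_smul, map_smul, IsometryEquiv.apply_inv_self,
    neg_smul, neg_add_eq_sub, sub_right_inj] at h
  exact h

def affineRoot (g : ι → V) (c : ι → ℝ) (u : ι) (x : V) : ℝ := ⟪g u, x⟫ + c u

variable {S C : Set ι} {g : ι → V} {c : ι → ℝ} {s u : ι}

lemma linearCombination_affineRoot_apply (l : ι →₀ ℝ) (x : V) :
    linearCombination ℝ (affineRoot g c) l x =
      ⟪linearCombination ℝ g l, x⟫ + linearCombination ℝ c l := by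
  simp only [linearCombination_apply, Finsupp.sum, Finset.sum_apply, sum_inner,
    Pi.smul_apply, affineRoot, smul_eq_mul, real_inner_smul_left, mul_add,
    Finset.sum_add_distrib]

lemma linearCombination_mapRange_intCast {M : Type*} [AddCommGroup M] [Module ℝ M] (v : ι → M)
    (n : ι →₀ ℤ) :
    linearCombination ℝ v (n.mapRange (↑) Int.cast_zero) = linearCombination ℤ v n := by
  simp [linearCombination_apply, Finsupp.sum_mapRange_index, Int.cast_smul_eq_zsmul]

lemma inner_linearCombination_mem (H : AddSubgroup ℝ) (n : ι →₀ ℤ) (w : V)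
    (h : ∀ u ∈ n.support, ⟪g u, w⟫ ∈ H) : ⟪linearCombination ℤ g n, w⟫ ∈ H := by
  rw [linearCombination_apply, Finsupp.sum, sum_inner]
  refine H.sum_mem fun u hu => ?_
  rw [← Int.cast_smul_eq_zsmul ℝ, real_inner_smul_left, ← zsmul_eq_mul]
  exact H.zsmul_mem (h u hu) _

lemma eq_of_forall_inner_add_eq {v v' : V} {d d' : ℝ} (h : ∀ x, ⟪v, x⟫ + d = ⟪v', x⟫ + d') :
    v = v' := by
  have hd : d = d' := by simpa using h 0
  exact ext_inner_right ℝ fun x => by linarith [h x]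

lemma SimpleGraph.Reachable.mem_of_forall_adj_mem {W : Type*} {G : SimpleGraph W} {A : Set W}
    (hA : ∀ u ∈ A, ∀ v, G.Adj u v → v ∈ A) {u v : W} (h : G.Reachable u v) (hu : u ∈ A) :
    v ∈ A := by
  rw [SimpleGraph.reachable_iff_reflTransGen] at h
  induction h with
  | refl => exact hu
  | tail _ hadj ih => exact hA _ ih _ hadj

/-- Edges join the simple reflections (elements of `S`) with non-orthogonal roots, that is, those
whose product has order at least `3`. -/
def coxeterGraph (S : Set ι) (g : ι → V) : SimpleGraph ι where
  Adj u v := u ≠ v ∧ u ∈ S ∧ v ∈ S ∧ ⟪g u, g v⟫ ≠ 0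
  symm := ⟨fun _ _ h => ⟨h.1.symm, h.2.2.1, h.2.1, by rw [real_inner_comm]; exact h.2.2.2⟩⟩
  loopless := ⟨fun _ h => h.1 rfl⟩

lemma coxeterGraph_adj {v : ι} :
    (coxeterGraph S g).Adj u v ↔ u ≠ v ∧ u ∈ S ∧ v ∈ S ∧ ⟪g u, g v⟫ ≠ 0 :=
  Iff.rfl

lemma coxeterGraph.mem_of_reachable (hs : s ∈ S) (h : (coxeterGraph S g).Reachable s u) :
    u ∈ S :=
  h.mem_of_forall_adj_mem (fun _ _ _ hadj => (coxeterGraph_adj.mp hadj).2.2.1) hs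

lemma coxeterGraph.reachable_of_inner_ne_zero (hs : s ∈ S)
    (h : (coxeterGraph S g).Reachable s u) {q : ι} (hq : q ∈ S) (hne : ⟪g u, g q⟫ ≠ 0) :
    (coxeterGraph S g).Reachable s q := by
  rcases eq_or_ne u q with rfl | huq
  · exact h
  · exact h.trans (coxeterGraph_adj.mpr ⟨huq, mem_of_reachable hs h, hq, hne⟩).reachable

lemma Finsupp.posPart_apply (l : ι →₀ ℝ) (u : ι) : l⁺ u = max (l u) 0 := by
  simp [posPart, Finsupp.sup_apply]

lemma linearCombination_posPart_eq_zero (hobtuse : ∀ u ∈ S, ∀ v ∈ S, u ≠ v → ⟪g u, g v⟫ ≤ 0)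
    {l : ι →₀ ℝ} (hlS : ↑l.support ⊆ S) (hl : linearCombination ℝ g l = 0) :
    linearCombination ℝ g l⁺ = 0 := by
  have hp : linearCombination ℝ g l⁺ = linearCombination ℝ g l⁻ := by
    rw [← sub_eq_zero, ← map_sub, posPart_sub_negPart, hl]
  have hpos : ∀ u ∈ l⁺.support, 0 < l u := fun u hu => by
    by_contra h; simp_all [Finsupp.posPart_apply]
  have hneg : ∀ v ∈ l⁻.support, l v < 0 := fun v hv => by
    by_contra h; simp_all [← posPart_neg, Finsupp.posPart_apply]
  have hpp : ⟪linearCombination ℝ g l⁺, linearCombination ℝ g l⁻⟫ ≤ 0 := by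
    rw [linearCombination_apply, linearCombination_apply, Finsupp.sum,
      Finsupp.sum, sum_inner]
    refine Finset.sum_nonpos fun u hu => ?_
    rw [inner_sum]
    refine Finset.sum_nonpos fun v hv => ?_
    have huv : u ≠ v := by rintro rfl; linarith [hpos u hu, hneg u hv]
    have huS : u ∈ S := hlS (Finsupp.mem_support_iff.mpr (hpos u hu).ne')
    have hvS : v ∈ S := hlS (Finsupp.mem_support_iff.mpr (hneg v hv).ne)
    rw [real_inner_smul_left, real_inner_smul_right]
    exact mul_nonpos_of_nonneg_of_nonpos (posPart_nonneg l u)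
      (mul_nonpos_of_nonneg_of_nonpos (negPart_nonneg l v) (hobtuse u huS v hvS huv))
  rw [← hp] at hpp
  exact inner_self_eq_zero.mp (le_antisymm hpp real_inner_self_nonneg)

lemma Finsupp.support_posPart_subset (l : ι →₀ ℝ) : l⁺.support ⊆ l.support := fun u hu => by
  by_contra h; simp_all [Finsupp.posPart_apply]

lemma mem_support_of_adj_of_linearCombination_eq_zero
    (hobtuse : ∀ u ∈ S, ∀ v ∈ S, u ≠ v → ⟪g u, g v⟫ ≤ 0) {a : ι →₀ ℝ} (ha : 0 ≤ a)
    (haS : ↑a.support ⊆ S) (h : linearCombination ℝ g a = 0) {u q : ι}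
    (hu : u ∈ a.support) (hadj : (coxeterGraph S g).Adj u q) : q ∈ a.support := by
  obtain ⟨-, -, hq, hne⟩ := coxeterGraph_adj.mp hadj
  by_contra hqa
  have hsum : ∑ v ∈ a.support, a v * ⟪g q, g v⟫ = 0 := by
    simpa [linearCombination_apply, Finsupp.sum, inner_sum, real_inner_smul_right]
      using congrArg (⟪g q, ·⟫) h
  have hterm : ∀ v ∈ a.support, a v * ⟪g q, g v⟫ ≤ 0 := fun v hv =>
    mul_nonpos_of_nonneg_of_nonpos (ha v)
      (hobtuse q hq v (haS hv) (by rintro rfl; exact hqa hv))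
  have := (Finset.sum_eq_zero_iff_of_nonpos hterm).mp hsum u hu
  rw [real_inner_comm] at hne
  exact hne ((mul_eq_zero.mp this).resolve_left (Finsupp.mem_support_iff.mp hu))

lemma eq_zero_of_nonneg_of_linearCombination_affineRoot_eq_zero {x₀ : V}
    (hx₀ : ∀ u ∈ S, 0 < ⟪g u, x₀⟫ + c u) {a : ι →₀ ℝ} (ha : 0 ≤ a) (haS : ↑a.support ⊆ S)
    (h : linearCombination ℝ (affineRoot g c) a = 0) : a = 0 := by
  have hsum : ∑ u ∈ a.support, a u * (⟪g u, x₀⟫ + c u) = 0 := by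
    simpa [linearCombination_apply, Finsupp.sum, affineRoot] using congrFun h x₀
  have hterm : ∀ u ∈ a.support, 0 ≤ a u * (⟪g u, x₀⟫ + c u) := fun u hu =>
    mul_nonneg (ha u) (hx₀ u (haS hu)).le
  ext u
  by_contra hu
  have hu' : u ∈ a.support := Finsupp.mem_support_iff.mpr hu
  have := (Finset.sum_eq_zero_iff_of_nonneg hterm).mp hsum u hu'
  exact (mul_ne_zero hu (hx₀ u (haS hu')).ne') this

lemma eq_zero_of_linearCombination_affineRoot_eq_zero_of_apply_nonpos
    (hobtuse : ∀ u ∈ S, ∀ v ∈ S, u ≠ v → ⟪g u, g v⟫ ≤ 0) {x₀ : V}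
    (hx₀ : ∀ u ∈ S, 0 < ⟪g u, x₀⟫ + c u) (hs : s ∈ S) {l : ι →₀ ℝ}
    (hlC : l ∈ supported ℝ ℝ {u | (coxeterGraph S g).Reachable s u})
    (hl : linearCombination ℝ (affineRoot g c) l = 0) (hls : l s ≤ 0) : l = 0 := by
  have hlS : ↑l.support ⊆ S := fun u hu => coxeterGraph.mem_of_reachable hs (hlC hu)
  have hgrad : linearCombination ℝ g l = 0 :=
    eq_of_forall_inner_add_eq (d' := 0) fun x => by
      simpa [linearCombination_affineRoot_apply] using congrFun hl x
  have hposS : ↑l⁺.support ⊆ S := fun u hu => hlS (l.support_posPart_subset hu)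
  have hpos : l⁺ = 0 := by
    -- `l⁺.support` is closed under adjacency in the Coxeter graph, so it contains `s` if nonempty
    by_contra hne
    obtain ⟨u, hu⟩ := Finsupp.support_nonempty_iff.mpr hne
    have hsu : s ∈ l⁺.support :=
      (hlC (l.support_posPart_subset hu)).symm.mem_of_forall_adj_mem
        (fun _ hv _ => mem_support_of_adj_of_linearCombination_eq_zero hobtuse
          (posPart_nonneg l) hposS (linearCombination_posPart_eq_zero hobtuse hlS hgrad) hv) hu
    simp_all [Finsupp.posPart_apply]
  have hl' : l = -l⁻ := by rw [← zero_sub, ← hpos, posPart_sub_negPart]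
  have hneg : l⁻ = 0 := by
    refine eq_zero_of_nonneg_of_linearCombination_affineRoot_eq_zero hx₀ (negPart_nonneg l)
      (fun u hu => hlS ?_) ?_
    · rw [← posPart_neg] at hu
      simpa using (-l).support_posPart_subset hu
    · rwa [hl', map_neg, neg_eq_zero] at hl
  rw [hl', hneg, neg_zero]

theorem linearIndepOn_affineRoot_reachable
    (hobtuse : ∀ u ∈ S, ∀ v ∈ S, u ≠ v → ⟪g u, g v⟫ ≤ 0) {x₀ : V}
    (hx₀ : ∀ u ∈ S, 0 < ⟪g u, x₀⟫ + c u) (hs : s ∈ S) :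
    LinearIndepOn ℝ (affineRoot g c) {u | (coxeterGraph S g).Reachable s u} := by
  refine linearIndepOn_iff.mpr fun l hlC hl => ?_
  rcases le_total (l s) 0 with hls | hls
  · exact eq_zero_of_linearCombination_affineRoot_eq_zero_of_apply_nonpos hobtuse hx₀ hs hlC hl
      hls
  · refine neg_eq_zero.mp (eq_zero_of_linearCombination_affineRoot_eq_zero_of_apply_nonpos
      hobtuse hx₀ hs (neg_mem hlC) (by rw [map_neg, hl, neg_zero]) ?_)
    simpa using hls

def IsOddCombination (g : ι → V) (c : ι → ℝ) (C : Set ι) (s : ι) (f : V → ℝ) : Prop :=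
  ∃ n ∈ supported ℤ ℤ C, Odd (n s) ∧ linearCombination ℤ (affineRoot g c) n = f

lemma isOddCombination_affineRoot (hs : s ∈ C) : IsOddCombination g c C s (affineRoot g c s) :=
  ⟨Finsupp.single s 1, single_mem_supported ℤ 1 hs, by simp, by simp⟩

lemma IsAffineReflection.linearCombination_affineRoot_comp {r : V → V} {ρ : ι}
    (hr : IsAffineReflection r (g ρ) (c ρ)) (n : ι →₀ ℤ) :
    linearCombination ℤ (affineRoot g c) n ∘ r =
      linearCombination ℤ (affineRoot g c) n -
        ⟪linearCombination ℤ g n, coroot (g ρ)⟫ • affineRoot g c ρ := by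
  ext x
  simp only [Function.comp_apply, Pi.sub_apply, Pi.smul_apply, smul_eq_mul,
    ← linearCombination_mapRange_intCast, linearCombination_affineRoot_apply, hr.inner_apply]
  simp only [affineRoot]
  ring

lemma IsOddCombination.comp_reflection {Λ : AddSubgroup V} (hCS : C ⊆ S)
    (hC : ∀ u ∈ C, ∀ q ∈ S, ⟪g u, g q⟫ ≠ 0 → q ∈ C)
    (hcrys : ∀ u ∈ S, ∀ v ∈ S, ∃ k : ℤ, ⟪g u, coroot (g v)⟫ = k) (hgΛ : ∀ u ∈ S, g u ∈ Λ)
    (hambig : ∀ v ∈ Λ, ∃ k : ℤ, ⟪v, coroot (g s)⟫ = 2 * k) {r : V → V} {ρ : ι} (hρ : ρ ∈ S)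
    (hr : IsAffineReflection r (g ρ) (c ρ)) {f : V → ℝ} (hf : IsOddCombination g c C s f) :
    IsOddCombination g c C s (f ∘ r) := by
  classical
  obtain ⟨n, hnC, hodd, rfl⟩ := hf
  have hnS : ∀ u ∈ n.support, u ∈ S := fun u hu => hCS (hnC hu)
  obtain ⟨K, hK⟩ :
      ⟪linearCombination ℤ g n, coroot (g ρ)⟫ ∈ (Int.castAddHom ℝ).range :=
    inner_linearCombination_mem _ n _ fun u hu => by
      obtain ⟨k, hk⟩ := hcrys u (hnS u hu) ρ hρ
      exact ⟨k, hk.symm⟩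
  simp only [Int.coe_castAddHom] at hK
  refine ⟨n - Finsupp.single ρ K, sub_mem hnC ?_, ?_, ?_⟩
  · by_cases hρC : ρ ∈ C
    · exact single_mem_supported ℤ K hρC
    · suffices K = 0 by simp [this]
      have h0 := inner_linearCombination_mem (g := g) ⊥ n (coroot (g ρ)) fun u hu => by
        have : ⟪g u, g ρ⟫ = 0 := by_contra fun h => hρC (hC u (hnC hu) ρ hρ h)
        rw [AddSubgroup.mem_bot, coroot, real_inner_smul_right, this, mul_zero]
      rw [← hK, AddSubgroup.mem_bot] at h0
      exact_mod_cast h0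
  · rw [Finsupp.sub_apply, Finsupp.single_apply]
    split_ifs with hρs
    · subst hρs
      obtain ⟨k, hk⟩ := hambig _ (Λ.sum_mem fun u hu => Λ.zsmul_mem (hgΛ u (hnS u hu)) _)
      have hKk : K = 2 * k := by exact_mod_cast hK.trans hk
      rw [hKk]
      exact hodd.sub_even (even_two_mul k)
    · simpa using hodd
  · rw [map_sub, linearCombination_single, hr.linearCombination_affineRoot_comp, ← hK,
      Int.cast_smul_eq_zsmul]

lemma IsOddCombination.mem_of_eq_smul_affineRoot
    (hC : ∀ u ∈ C, ∀ q ∈ S, ⟪g u, g q⟫ ≠ 0 → q ∈ C) {t : ι} (ht : t ∈ S) (hgt : g t ≠ 0)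
    {μ : ℝ} (hμ : μ ≠ 0)
    (h : IsOddCombination g c C s (μ • affineRoot g c t)) : t ∈ C := by
  obtain ⟨n, hnC, -, hn⟩ := h
  have hgrad : linearCombination ℤ g n = μ • g t := by
    refine eq_of_forall_inner_add_eq (d := linearCombination ℤ c n) (d' := μ * c t)
      fun x => ?_
    have := congrFun hn x
    rw [← linearCombination_mapRange_intCast, linearCombination_affineRoot_apply] at this
    simp only [linearCombination_mapRange_intCast] at this
    simpa [affineRoot, real_inner_smul_left, mul_add] using this
  by_contra htC
  have h0 := inner_linearCombination_mem (g := g) ⊥ n (g t) fun u hu =>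
    AddSubgroup.mem_bot.mpr (by_contra fun h => htC (hC u (hnC hu) t ht h))
  rw [hgrad, AddSubgroup.mem_bot, real_inner_smul_left, real_inner_self_eq_norm_sq] at h0
  have : ‖g t‖ ≠ 0 := norm_ne_zero_iff.mpr hgt
  exact mul_ne_zero hμ (by positivity) h0

lemma IsOddCombination.eq_of_eq_smul_affineRoot (hind : LinearIndepOn ℝ (affineRoot g c) C)
    {t : ι} (ht : t ∈ C) {μ : ℝ} (h : IsOddCombination g c C s (μ • affineRoot g c t)) :
    s = t := by
  classical
  obtain ⟨n, hnC, hodd, hn⟩ := h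
  set l : ι →₀ ℝ := n.mapRange (↑) Int.cast_zero - Finsupp.single t μ
  have hlC : l ∈ supported ℝ ℝ C :=
    sub_mem (fun u hu => hnC (Finsupp.support_mapRange hu))
      (single_mem_supported ℝ μ ht)
  have hl : linearCombination ℝ (affineRoot g c) l = 0 := by
    rw [map_sub, linearCombination_mapRange_intCast, hn, linearCombination_single, sub_self]
  have hls := congrArg (· s) (linearIndepOn_iff.mp hind l hlC hl)
  by_contra hst
  simp [l, Ne.symm hst] at hls
  simp [hls] at hodd

lemma IsOddCombination.comp_of_mem_closure {S C : Set (V ≃ᵢ V)} {g : (V ≃ᵢ V) → V}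
    {c : (V ≃ᵢ V) → ℝ} {s : V ≃ᵢ V} {Λ : AddSubgroup V}
    (hrefl : ∀ r ∈ S, IsAffineReflection r (g r) (c r)) (hgne : ∀ r ∈ S, g r ≠ 0)
    (hCS : C ⊆ S) (hC : ∀ u ∈ C, ∀ q ∈ S, ⟪g u, g q⟫ ≠ 0 → q ∈ C)
    (hcrys : ∀ u ∈ S, ∀ v ∈ S, ∃ k : ℤ, ⟪g u, coroot (g v)⟫ = k) (hgΛ : ∀ u ∈ S, g u ∈ Λ)
    (hambig : ∀ v ∈ Λ, ∃ k : ℤ, ⟪v, coroot (g s)⟫ = 2 * k) {w : V ≃ᵢ V}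
    (hw : w ∈ Subgroup.closure S) {f : V → ℝ} (hf : IsOddCombination g c C s f) :
    IsOddCombination g c C s (f ∘ w) := by
  induction hw using Subgroup.closure_induction'' generalizing f with
  | mem r hr => exact hf.comp_reflection hCS hC hcrys hgΛ hambig hr (hrefl r hr)
  | inv_mem r hr =>
    rw [(hrefl r hr).inv_eq_self (hgne r hr)]
    exact hf.comp_reflection hCS hC hcrys hgΛ hambig hr (hrefl r hr)
  | one => simpa using hf
  | mul x y _ _ hx hy =>
    rw [IsometryEquiv.coe_mul, ← Function.comp_assoc]
    exact hy (hx hf)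

end

theorem ambiguous_simple_reflection_conjugacy_general
    {V : Type*} [NormedAddCommGroup V] [InnerProductSpace ℝ V]
    (S : Set (V ≃ᵢ V)) (g : (V ≃ᵢ V) → V) (c : (V ≃ᵢ V) → ℝ)
    (hrefl : ∀ s ∈ S, ∀ x : V, s x = x - (⟪g s, x⟫ + c s) • ((2 / ‖g s‖ ^ 2) • g s))
    (hgne : ∀ s ∈ S, g s ≠ 0)
    (Λ : AddSubgroup V)
    (hgΛ : ∀ s ∈ S, g s ∈ Λ)
    (hcrys : ∀ s ∈ S, ∀ t ∈ S, ∃ k : ℤ, ⟪g s, (2 / ‖g t‖ ^ 2) • g t⟫ = (k : ℝ))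
    (hobtuse : ∀ s ∈ S, ∀ t ∈ S, s ≠ t → ⟪g s, g t⟫ ≤ 0)
    (hchamber : ∃ x : V, ∀ s ∈ S, 0 < ⟪g s, x⟫ + c s)
    (s : V ≃ᵢ V) (hsS : s ∈ S)
    (hambig : ∀ v ∈ Λ, ∃ k : ℤ, ⟪v, (2 / ‖g s‖ ^ 2) • g s⟫ = 2 * (k : ℝ))
    (t : V ≃ᵢ V) (htS : t ∈ S)
    (hconj : ∃ w ∈ Subgroup.closure S, w * s * w⁻¹ = t) :
    s = t := by
  have hrefl : ∀ r ∈ S, IsAffineReflection r (g r) (c r) := hrefl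
  obtain ⟨x₀, hx₀⟩ := hchamber
  obtain ⟨w, hw, hwt⟩ := hconj
  set C := {u | (coxeterGraph S g).Reachable s u}
  have hsC : s ∈ C := SimpleGraph.Reachable.refl s
  have hCS : C ⊆ S := fun _ hu => coxeterGraph.mem_of_reachable hsS hu
  have hC : ∀ u ∈ C, ∀ q ∈ S, ⟪g u, g q⟫ ≠ 0 → q ∈ C := fun _ hu _ hq hne =>
    coxeterGraph.reachable_of_inner_ne_zero hsS hu hq hne
  obtain ⟨μ, hμ, hst⟩ := (hrefl s hsS).exists_comp_inv_eq_mul (hrefl t htS) (hgne s hsS)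
    (hgne t htS) hwt (hx₀ t htS).ne'
  have hodd : IsOddCombination g c C s (affineRoot g c s ∘ ⇑w⁻¹) :=
    (isOddCombination_affineRoot hsC).comp_of_mem_closure hrefl hgne hCS hC hcrys hgΛ hambig
      (inv_mem hw)
  rw [show affineRoot g c s ∘ ⇑w⁻¹ = μ • affineRoot g c t from funext hst] at hodd
  exact hodd.eq_of_eq_smul_affineRoot (linearIndepOn_affineRoot_reachable hobtuse hx₀ hsS)
    (hodd.mem_of_eq_smul_affineRoot hC htS (hgne t htS) hμ)

/-- Let `W` be an affine Weyl group on a Euclidean space, generated by a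
set `S` of simple reflections (each `s ∈ S` being the reflection attached to the affine
function `π_s(x) = ⟪g s, x⟫ + c s`, all positive on a common chamber and with pairwise
obtuse, crystallographic gradients which are primitive vectors of a `W`-invariant
lattice `Λ`).  Call `s ∈ S` ambiguous if `⟨Λ, π̄_s^∨⟩ = 2ℤ`.  If `s ∈ S` is ambiguous
and `t ∈ S` is `W`-conjugate to `s`, then `s = t`. -/
theorem ambiguous_simple_reflection_conjugacy
    {V : Type*} [NormedAddCommGroup V] [InnerProductSpace ℝ V] [FiniteDimensional ℝ V]
    (S : Set (V ≃ᵢ V)) (g : (V ≃ᵢ V) → V) (c : (V ≃ᵢ V) → ℝ)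
    (hrefl : ∀ s ∈ S, ∀ x : V, s x = x - (⟪g s, x⟫ + c s) • ((2 / ‖g s‖ ^ 2) • g s))
    (hgne : ∀ s ∈ S, g s ≠ 0)
    (Λ : AddSubgroup V)
    (hΛW : ∀ w ∈ Subgroup.closure S, ∀ v ∈ Λ, w v - w (0 : V) ∈ Λ)
    (hgΛ : ∀ s ∈ S, g s ∈ Λ)
    (hprim : ∀ s ∈ S, ∀ (m : ℕ) (v : V), v ∈ Λ → (m : ℝ) • v = g s → m = 1)
    (hcrys : ∀ s ∈ S, ∀ t ∈ S, ∃ k : ℤ, ⟪g s, (2 / ‖g t‖ ^ 2) • g t⟫ = (k : ℝ))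
    (hobtuse : ∀ s ∈ S, ∀ t ∈ S, s ≠ t → ⟪g s, g t⟫ ≤ 0)
    (hchamber : ∃ x : V, ∀ s ∈ S, 0 < ⟪g s, x⟫ + c s)
    (s : V ≃ᵢ V) (hsS : s ∈ S)
    (hambig : ∀ v ∈ Λ, ∃ k : ℤ, ⟪v, (2 / ‖g s‖ ^ 2) • g s⟫ = 2 * (k : ℝ))
    (hambig' : ∀ k : ℤ, ∃ v ∈ Λ, ⟪v, (2 / ‖g s‖ ^ 2) • g s⟫ = 2 * (k : ℝ))
    (t : V ≃ᵢ V) (htS : t ∈ S)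
    (hconj : ∃ w ∈ Subgroup.closure S, w * s * w⁻¹ = t) :
    s = t :=
  ambiguous_simple_reflection_conjugacy_general S g c hrefl hgne Λ hgΛ hcrys hobtuse hchamber s hsS
    hambig t htS hconj
end

section
/- Let a₁,…,aₙ be positive integers with gcd 1, set δ = (a₁,…,aₙ) and H = {x ∈ ℝⁿ : Σ a_i x_i = 0}. Let I ⊊ {1,…,n} with complement I' ≠ ∅, and d_I = gcd{a_j : j ∈ I'}. Define p_I : (ℤ^I ⊕ ℝ^{I'}) ∩ H → ℤ/d_Iℤ by (x_i) ↦ Σ_{i∈I} a_i x_i mod d_I. Then p_I is a surjective group homomorphism with kernel exactly (ℝ^{I'} ∩ H) + (ℤⁿ ∩ H). Consequently it induces an isomorphism ((ℤ^I ⊕ ℝ^{I'}) ∩ H) / ((ℝ^{I'} ∩ H) + (ℤⁿ ∩ H)) ≅ ℤ/d_Iℤ. -/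
/-! Two facts about a weighted sum `∑_{i ∈ s} aᵢ kᵢ` with integral `k` drive everything: it is a
multiple of `gcd_{i ∈ s} aᵢ`, and by Bézout it can equal that gcd. For surjectivity, take
`∑ aᵢ cᵢ = 1`; then `m c`, corrected in one coordinate of `I'` to land in `H`, has `I`-part
`m (1 - ∑_{I'} aⱼ cⱼ) ≡ m mod d_I`. For the kernel, an `x` whose `I`-part is `k d_I` is completed on
`I'` to an integral vector of `H` by `-k` times a Bézout vector for `(aⱼ)_{j ∈ I'}`. -/

open Finset

theorem Finset.natCast_gcd {ι : Type*} (s : Finset ι) (f : ι → ℕ) :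
    ((s.gcd f : ℕ) : ℤ) = s.gcd fun i => (f i : ℤ) := by
  classical
  induction s using Finset.induction_on with
  | empty => simp
  | insert j s hj ih =>
    rw [gcd_insert, gcd_insert, ← ih, ← Int.coe_gcd, Int.gcd_natCast_natCast]
    rfl

section

variable {ι : Type*} (a : ι → ℕ)

theorem exists_sum_mul_eq_gcd (s : Finset ι) :
    ∃ c : ι → ℤ, ∑ i ∈ s, (a i : ℝ) * c i = s.gcd a := by
  obtain ⟨c, hc⟩ := s.gcd_eq_sum_mul fun i => (a i : ℤ)
  rw [← Finset.natCast_gcd] at hc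
  exact ⟨c, by exact_mod_cast hc.symm⟩

theorem sum_mul_mem_zmultiples_gcd {s : Finset ι} {x : ι → ℝ} (hx : ∀ i ∈ s, ∃ k : ℤ, x i = k) :
    ∑ i ∈ s, (a i : ℝ) * x i ∈ AddSubgroup.zmultiples ((s.gcd a : ℕ) : ℝ) := by
  refine AddSubgroup.sum_mem _ fun i hi => ?_
  obtain ⟨k, hk⟩ := hx i hi
  obtain ⟨q, hq⟩ := Finset.gcd_dvd (f := a) hi
  exact AddSubgroup.mem_zmultiples_iff.mpr ⟨q * k, by rw [hk, hq, zsmul_eq_mul]; push_cast; ring⟩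

variable [Fintype ι] [DecidableEq ι] {a} {I : Finset ι}

theorem exists_sum_eq_zero_and_sum_eq_add_mul_gcd_compl (hgcd : univ.gcd a = 1)
    {j : ι} (hjI : j ∉ I) (hj : a j ≠ 0) (m : ℤ) :
    ∃ x : ι → ℝ, (∑ i, (a i : ℝ) * x i = 0) ∧ (∀ i ∈ I, ∃ k : ℤ, x i = k) ∧
      ∃ k : ℤ, ∑ i ∈ I, (a i : ℝ) * x i = ((m + k * Iᶜ.gcd a : ℤ) : ℝ) := by
  obtain ⟨c, hc⟩ := exists_sum_mul_eq_gcd a univ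
  rw [hgcd, Nat.cast_one] at hc
  obtain ⟨t, ht⟩ := AddSubgroup.mem_zmultiples_iff.mp <|
    sum_mul_mem_zmultiples_gcd a (s := Iᶜ) (x := fun i => (c i : ℝ)) fun i _ => ⟨c i, rfl⟩
  let x : ι → ℝ := fun i => m * c i - (Pi.single j ((m : ℝ) / a j) : ι → ℝ) i
  have hxI : ∀ i ∈ I, x i = m * c i := fun i hi => by
    simp [x, Pi.single_apply, show i ≠ j by rintro rfl; exact hjI hi]
  refine ⟨x, ?_, fun i hi => ⟨m * c i, by rw [hxI i hi]; push_cast; rfl⟩, -m * t, ?_⟩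
  · simp only [x, mul_sub, sum_sub_distrib, mul_left_comm _ (m : ℝ), ← mul_sum, hc, mul_one,
      Pi.single_apply, mul_ite, mul_zero, sum_ite_eq', mem_univ, if_true]
    rw [mul_div_cancel₀ _ (Nat.cast_ne_zero.mpr hj), sub_self]
  · calc ∑ i ∈ I, (a i : ℝ) * x i = m * ∑ i ∈ I, (a i : ℝ) * c i := by
          rw [mul_sum]; exact sum_congr rfl fun i hi => by rw [hxI i hi]; ring
      _ = m * (1 - ∑ i ∈ Iᶜ, (a i : ℝ) * c i) := by rw [← hc, ← sum_add_sum_compl I]; ring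
      _ = _ := by rw [← ht, zsmul_eq_mul]; push_cast; ring

theorem exists_int_decomposition_of_sum_eq_mul_gcd_compl {x : ι → ℝ}
    (hx : ∑ i, (a i : ℝ) * x i = 0) (hxI : ∀ i ∈ I, ∃ k : ℤ, x i = k) {k : ℤ}
    (hk : ∑ i ∈ I, (a i : ℝ) * x i = ((k * Iᶜ.gcd a : ℤ) : ℝ)) :
    ∃ u v : ι → ℝ, x = u + v ∧ (∀ i ∈ I, u i = 0) ∧ (∑ i, (a i : ℝ) * u i = 0) ∧
      (∀ i, ∃ k : ℤ, v i = k) ∧ (∑ i, (a i : ℝ) * v i = 0) := by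
  obtain ⟨c, hc⟩ := exists_sum_mul_eq_gcd a Iᶜ
  let v : ι → ℝ := fun i => if i ∈ I then x i else -k * c i
  have hv : ∑ i, (a i : ℝ) * v i = 0 := by
    rw [← sum_add_sum_compl I]
    have hvI : ∑ i ∈ I, (a i : ℝ) * v i = ∑ i ∈ I, (a i : ℝ) * x i :=
      sum_congr rfl fun i hi => by simp [v, hi]
    have hvIc : ∑ i ∈ Iᶜ, (a i : ℝ) * v i = -k * ∑ i ∈ Iᶜ, (a i : ℝ) * c i := by
      rw [mul_sum]
      exact sum_congr rfl fun i hi => by simp [v, mem_compl.mp hi]; ring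
    rw [hvI, hvIc, hk, hc]
    push_cast
    ring
  refine ⟨x - v, v, (sub_add_cancel x v).symm, fun i hi => by simp [v, hi], ?_, fun i => ?_, hv⟩
  · simp only [Pi.sub_apply, mul_sub, sum_sub_distrib, hx, hv, sub_zero]
  · by_cases hi : i ∈ I
    · simpa [v, hi] using hxI i hi
    · exact ⟨-k * c i, by simp [v, hi]⟩

theorem exists_sum_eq_mul_gcd_compl_of_int_decomposition {u v : ι → ℝ}
    (hu : ∀ i ∈ I, u i = 0) (hv : ∀ i, ∃ k : ℤ, v i = k) (hvsum : ∑ i, (a i : ℝ) * v i = 0) :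
    ∃ k : ℤ, ∑ i ∈ I, (a i : ℝ) * (u + v) i = ((k * Iᶜ.gcd a : ℤ) : ℝ) := by
  obtain ⟨t, ht⟩ := AddSubgroup.mem_zmultiples_iff.mp <|
    sum_mul_mem_zmultiples_gcd a (s := Iᶜ) fun i _ => hv i
  refine ⟨-t, ?_⟩
  have huv : ∑ i ∈ I, (a i : ℝ) * (u + v) i = ∑ i ∈ I, (a i : ℝ) * v i :=
    sum_congr rfl fun i hi => by simp [hu i hi]
  rw [huv, eq_neg_of_add_eq_zero_left ((sum_add_sum_compl I _).trans hvsum), ← ht, zsmul_eq_mul]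
  push_cast
  ring

end

/-- with `H = {x ∈ ℝⁿ : Σ aᵢxᵢ = 0}`, `d_I = gcd{a_j : j ∈ I'}`, the map
`p_I : (ℤ^I ⊕ ℝ^{I'}) ∩ H → ℤ/d_Iℤ`, `x ↦ Σ_{i∈I} aᵢxᵢ mod d_I` is a well-defined
(integer-valued before reduction) surjective homomorphism whose kernel is exactly
`(ℝ^{I'} ∩ H) + (ℤⁿ ∩ H)`. -/
theorem label_quotient_iso
    (n : ℕ) (a : Fin n → ℕ) (ha : ∀ i, 0 < a i)
    (hgcd : Finset.univ.gcd a = 1)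
    (I : Finset (Fin n)) (hI : I ≠ Finset.univ) :
    -- the domain `(ℤ^I ⊕ ℝ^{I'}) ∩ H`
    let S : Set (Fin n → ℝ) :=
      {x | (∑ i, (a i : ℝ) * x i = 0) ∧ ∀ i ∈ I, ∃ k : ℤ, x i = (k : ℝ)}
    let d : ℕ := Iᶜ.gcd a
    -- `p_I` takes integer values
    (∀ x ∈ S, ∃ m : ℤ, ∑ i ∈ I, (a i : ℝ) * x i = (m : ℝ)) ∧
    -- `p_I` is additive (a group homomorphism)
    (∀ x ∈ S, ∀ y ∈ S, x + y ∈ S ∧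
      ∑ i ∈ I, (a i : ℝ) * (x + y) i =
        (∑ i ∈ I, (a i : ℝ) * x i) + ∑ i ∈ I, (a i : ℝ) * y i) ∧
    -- `p_I` is surjective onto `ℤ/d_Iℤ`
    (∀ m : ℤ, ∃ x ∈ S, ∃ k : ℤ, ∑ i ∈ I, (a i : ℝ) * x i = ((m + k * d : ℤ) : ℝ)) ∧
    -- the kernel of `p_I` is exactly `(ℝ^{I'} ∩ H) + (ℤⁿ ∩ H)`
    (∀ x ∈ S, (∃ k : ℤ, ∑ i ∈ I, (a i : ℝ) * x i = ((k * d : ℤ) : ℝ)) ↔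
      ∃ u v : Fin n → ℝ, x = u + v ∧
        (∀ i ∈ I, u i = 0) ∧ (∑ i, (a i : ℝ) * u i = 0) ∧
        (∀ i, ∃ k : ℤ, v i = (k : ℝ)) ∧ (∑ i, (a i : ℝ) * v i = 0)) := by
  intro S d
  obtain ⟨j, hj⟩ : ∃ j, j ∉ I := by simpa [eq_univ_iff_forall] using hI
  refine ⟨fun x hx => ?_, fun x hx y hy => ?_, fun m => ?_, fun x hx => ⟨?_, ?_⟩⟩
  · obtain ⟨t, ht⟩ := AddSubgroup.mem_zmultiples_iff.mp (sum_mul_mem_zmultiples_gcd a hx.2)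
    exact ⟨t * I.gcd a, by rw [← ht, zsmul_eq_mul]; push_cast; rfl⟩
  · refine ⟨⟨?_, fun i hi => ?_⟩, by simp only [Pi.add_apply, mul_add, sum_add_distrib]⟩
    · simp only [Pi.add_apply, mul_add, sum_add_distrib, hx.1, hy.1, add_zero]
    · obtain ⟨k, hk⟩ := hx.2 i hi
      obtain ⟨l, hl⟩ := hy.2 i hi
      exact ⟨k + l, by simp [hk, hl]⟩
  · obtain ⟨x, hx, hxI, hk⟩ :=
      exists_sum_eq_zero_and_sum_eq_add_mul_gcd_compl hgcd hj (ha j).ne' m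
    exact ⟨x, ⟨hx, hxI⟩, hk⟩
  · rintro ⟨k, hk⟩
    exact exists_int_decomposition_of_sum_eq_mul_gcd_compl hx.1 hx.2 hk
  · rintro ⟨u, v, rfl, hu, -, hv, hvsum⟩
    exact exists_sum_eq_mul_gcd_compl_of_int_decomposition hu hv hvsum
end

section
/- Let a = (a₁,…,aₙ) be positive integers, H = {x ∈ ℝⁿ : Σ a_i x_i = 0}, I ⊆ {1,…,n} with I' = complement nonempty, and d_I = gcd{a_j : j ∈ I'}. Define ρ : ℤⁿ ∩ H → ℤ^I by projection onto the I-coordinates and ψ : ℤ^I → ℤ/d_Iℤ by (y_i) ↦ Σ a_i y_i mod d_I. Then the sequence ℤⁿ ∩ H →^ρ ℤ^I →^ψ ℤ/d_Iℤ → 0 is exact: ψ is surjective (assuming gcd of all a_i is 1), and ker ψ = image of ρ. -/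
/-!
Both halves are Bézout. The gcds of the `a i` over `I` and over `Iᶜ` are coprime, so an integer
combination of the `a i` with `i ∈ I` is a unit modulo `d`, whence `ψ` is onto. If the `I`-part
of the sum is `k * d`, choosing the `Iᶜ`-coordinates as `-k` times a Bézout combination for `d`
cancels it; conversely `d` divides every `a j` with `j ∉ I`.
-/

namespace Finset

variable {ι : Type*}

theorem natCast_gcd_s12 (s : Finset ι) (f : ι → ℕ) :
    ((s.gcd f : ℕ) : ℤ) = s.gcd fun i => (f i : ℤ) := by
  induction s using Finset.cons_induction with
  | empty => simp
  | cons i s hi ih =>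
    rw [gcd_cons, gcd_cons, ← ih, ← Int.coe_gcd, Int.gcd_natCast_natCast]
    rfl

theorem exists_sum_mul_eq_gcd (s : Finset ι) (a : ι → ℕ) :
    ∃ c : ι → ℤ, ∑ i ∈ s, (a i : ℤ) * c i = s.gcd a := by
  obtain ⟨c, hc⟩ := s.gcd_eq_sum_mul fun i => (a i : ℤ)
  exact ⟨c, by rw [natCast_gcd_s12, hc]⟩

theorem coprime_gcd_gcd_compl [Fintype ι] [DecidableEq ι] {a : ι → ℕ} (h : univ.gcd a = 1)
    (I : Finset ι) : Nat.Coprime (I.gcd a) (Iᶜ.gcd a) := by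
  have hunion := gcd_union (s₁ := I) (s₂ := Iᶜ) (f := a)
  rwa [union_compl, h, eq_comm] at hunion

theorem exists_sum_mul_cast_eq_of_coprime {d : ℕ} (s : Finset ι) (a : ι → ℕ)
    (h : Nat.Coprime (s.gcd a) d) (m : ZMod d) :
    ∃ y : ι → ℤ, ((∑ i ∈ s, (a i : ℤ) * y i : ℤ) : ZMod d) = m := by
  obtain ⟨c, hc⟩ := s.exists_sum_mul_eq_gcd a
  obtain ⟨u, hu⟩ : ∃ u : (ZMod d)ˣ, (u : ZMod d) = s.gcd a :=
    ⟨ZMod.unitOfCoprime _ h, ZMod.coe_unitOfCoprime _ h⟩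
  obtain ⟨t, ht⟩ := ZMod.intCast_surjective (m * ((u⁻¹ : (ZMod d)ˣ) : ZMod d))
  refine ⟨fun i => c i * t, ?_⟩
  have hsum : ∑ i ∈ s, (a i : ℤ) * (c i * t) = (s.gcd a : ℕ) * t := by
    rw [← hc, sum_mul]
    exact sum_congr rfl fun i _ => by ring
  rw [hsum]
  push_cast
  rw [ht, ← hu, mul_left_comm, Units.mul_inv, mul_one]

theorem dvd_sum_mul_iff_exists_extension [Fintype ι] [DecidableEq ι] (a : ι → ℕ)
    (I : Finset ι) (y : ι → ℤ) :
    ((Iᶜ.gcd a : ℕ) : ℤ) ∣ ∑ i ∈ I, (a i : ℤ) * y i ↔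
      ∃ z : ι → ℤ, (∀ i ∈ I, z i = y i) ∧ ∑ i, (a i : ℤ) * z i = 0 := by
  constructor
  · rintro ⟨k, hk⟩
    obtain ⟨c, hc⟩ := Iᶜ.exists_sum_mul_eq_gcd a
    set z := I.piecewise y fun i => -k * c i with hz
    refine ⟨z, fun i hi => piecewise_eq_of_mem _ _ _ hi, ?_⟩
    rw [← sum_add_sum_compl I]
    have hI : ∑ i ∈ I, (a i : ℤ) * z i = (Iᶜ.gcd a : ℕ) * k := by
      rw [← hk]
      exact sum_congr rfl fun i hi => by rw [hz, piecewise_eq_of_mem _ _ _ hi]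
    have hIc : ∑ i ∈ Iᶜ, (a i : ℤ) * z i = -(Iᶜ.gcd a : ℕ) * k := by
      rw [neg_mul, ← hc, sum_mul, ← sum_neg_distrib]
      exact sum_congr rfl fun i hi => by
        rw [hz, piecewise_eq_of_notMem _ _ _ (mem_compl.mp hi)]; ring
    rw [hI, hIc]
    ring
  · rintro ⟨z, hzy, hz⟩
    have hsplit : ∑ i ∈ I, (a i : ℤ) * y i = -∑ i ∈ Iᶜ, (a i : ℤ) * z i := by
      rw [eq_neg_iff_add_eq_zero, ← hz, ← sum_add_sum_compl I]
      congr 1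
      exact sum_congr rfl fun i hi => by rw [hzy i hi]
    rw [hsplit, dvd_neg]
    exact dvd_sum fun i hi => (Int.natCast_dvd_natCast.mpr (gcd_dvd hi)).mul_right _

end Finset

theorem kernel_sequence_exact_general
    (n : ℕ) (a : Fin n → ℕ)
    (hgcd : Finset.univ.gcd a = 1)
    (I : Finset (Fin n)) :
    let d : ℕ := Iᶜ.gcd a
    -- ψ is surjective
    (∀ m : ZMod d, ∃ y : Fin n → ℤ,
        ((∑ i ∈ I, (a i : ℤ) * y i : ℤ) : ZMod d) = m) ∧
    -- ker ψ = im ρ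
    (∀ y : Fin n → ℤ,
        ((∑ i ∈ I, (a i : ℤ) * y i : ℤ) : ZMod d) = 0 ↔
          ∃ z : Fin n → ℤ, (∀ i ∈ I, z i = y i) ∧ ∑ i, (a i : ℤ) * z i = 0) :=
  ⟨I.exists_sum_mul_cast_eq_of_coprime a (Finset.coprime_gcd_gcd_compl hgcd I),
    fun y => (ZMod.intCast_zmod_eq_zero_iff_dvd _ _).trans
      (Finset.dvd_sum_mul_iff_exists_extension a I y)⟩

/-- exactness of `ℤⁿ ∩ H →^ρ ℤ^I →^ψ ℤ/d_Iℤ → 0`, where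
`H = {x : Σ aᵢxᵢ = 0}`, `ρ` is the projection to the `I`-coordinates,
`ψ(y) = Σ_{i∈I} aᵢyᵢ mod d_I` and `d_I = gcd{a_j : j ∉ I}`:  `ψ` is surjective
(using `gcd(a₁,…,aₙ) = 1`), and `ker ψ = im ρ`. -/
theorem kernel_sequence_exact
    (n : ℕ) (a : Fin n → ℕ) (ha : ∀ i, 0 < a i)
    (hgcd : Finset.univ.gcd a = 1)
    (I : Finset (Fin n)) (hI : I ≠ Finset.univ) :
    let d : ℕ := Iᶜ.gcd a
    -- ψ is surjective
    (∀ m : ZMod d, ∃ y : Fin n → ℤ,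
        ((∑ i ∈ I, (a i : ℤ) * y i : ℤ) : ZMod d) = m) ∧
    -- ker ψ = im ρ
    (∀ y : Fin n → ℤ,
        ((∑ i ∈ I, (a i : ℤ) * y i : ℤ) : ZMod d) = 0 ↔
          ∃ z : Fin n → ℤ, (∀ i ∈ I, z i = y i) ∧ ∑ i, (a i : ℤ) * z i = 0) :=
  kernel_sequence_exact_general n a hgcd I
end

section
/- Let P be a convex subset of a real affine space, W a group acting on the ambient affine space, and for each x ∈ P let W(x) be a subgroup fixing x, such that: for every z on a line segment l ⊆ P and points u ∈ l sufficiently close to z, one has W(u)_l = W(z)_l, where W(z)_l = {w ∈ W(z) : w fixes l pointwise}. Then for all x, y ∈ P: W(x)_y = W(y)_x, where W(x)_y is the stabilizer of y in W(x). -/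
/-!
Since elements of `W(x)` fix `x` and act affinely, `W(x)_y = W(x)_l` for `l = [x, y]`.
The hypothesis makes `z ↦ W(z)_l` locally constant on the connected set `l`, so
`W(x)_l = W(y)_l`, and the same remark at `y` gives `W(y)_l = W(y)_x`.
-/

open Topology

theorem IsPreconnected.apply_eq_of_eventually_eq {X Y : Type*} [TopologicalSpace X] {s : Set X}
    (hs : IsPreconnected s) {f : X → Y} (hf : ∀ z ∈ s, ∀ᶠ u in 𝓝[s] z, f u = f z)
    {x y : X} (hx : x ∈ s) (hy : y ∈ s) : f x = f y := by
  have : PreconnectedSpace s := Subtype.preconnectedSpace hs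
  have hlocal : IsLocallyConstant (s.domRestrict f) :=
    (IsLocallyConstant.iff_eventually_eq _).2 fun z =>
      (eventually_nhds_subtype_iff s z (fun u => f u = f z)).2 (hf z z.2)
  exact hlocal.apply_eq_of_preconnectedSpace ⟨x, hx⟩ ⟨y, hy⟩

section Segment

variable {𝕜 E : Type*} [Ring 𝕜] [PartialOrder 𝕜] [IsOrderedRing 𝕜] [AddCommGroup E] [Module 𝕜 E]

theorem AffineMap.apply_eq_self_of_mem_segment (f : E →ᵃ[𝕜] E) {x y v : E} (hx : f x = x)
    (hy : f y = y) (hv : v ∈ segment 𝕜 x y) : f v = v := by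
  rw [segment_eq_image_lineMap] at hv
  obtain ⟨t, -, rfl⟩ := hv
  rw [f.apply_lineMap, hx, hy]

theorem setOf_fixing_point_eq_setOf_fixing_segment {W : Subgroup (E ≃ᵃ[𝕜] E)} {x : E}
    (hfix : ∀ w ∈ W, w x = x) (y : E) :
    {w | w ∈ W ∧ w y = y} = {w | w ∈ W ∧ ∀ v ∈ segment 𝕜 x y, w v = v} := by
  ext w
  refine ⟨fun ⟨hw, hwy⟩ => ⟨hw, fun v hv => ?_⟩,
    fun ⟨hw, hseg⟩ => ⟨hw, hseg y (right_mem_segment 𝕜 x y)⟩⟩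
  exact (w : E →ᵃ[𝕜] E).apply_eq_self_of_mem_segment (hfix w hw) hwy hv

end Segment

theorem local_stabilizers_symmetric_general
    {V : Type*} [NormedAddCommGroup V] [NormedSpace ℝ V]
    (P : Set V)
    (Wfam : V → Subgroup (V ≃ᵃ[ℝ] V))
    (hfix : ∀ x ∈ P, ∀ w ∈ Wfam x, w x = x)
    (hloc : ∀ x ∈ P, ∀ y ∈ P, ∀ z ∈ segment ℝ x y, ∃ ε > (0:ℝ),
      ∀ u ∈ segment ℝ x y, ‖u - z‖ < ε →
        {w : V ≃ᵃ[ℝ] V | w ∈ Wfam u ∧ ∀ v ∈ segment ℝ x y, w v = v} =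
          {w : V ≃ᵃ[ℝ] V | w ∈ Wfam z ∧ ∀ v ∈ segment ℝ x y, w v = v}) :
    ∀ x ∈ P, ∀ y ∈ P,
      {w : V ≃ᵃ[ℝ] V | w ∈ Wfam x ∧ w y = y} =
        {w : V ≃ᵃ[ℝ] V | w ∈ Wfam y ∧ w x = x} := by
  intro x hx y hy
  have hlocal : ∀ z ∈ segment ℝ x y, ∀ᶠ u in 𝓝[segment ℝ x y] z,
      {w : V ≃ᵃ[ℝ] V | w ∈ Wfam u ∧ ∀ v ∈ segment ℝ x y, w v = v} =
        {w | w ∈ Wfam z ∧ ∀ v ∈ segment ℝ x y, w v = v} := fun z hz => by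
    obtain ⟨ε, hε, hball⟩ := hloc x hx y hy z hz
    exact eventually_nhdsWithin_iff.2 <| Metric.eventually_nhds_iff.2
      ⟨ε, hε, fun u hu hul => hball u hul (by rwa [← dist_eq_norm])⟩
  calc {w | w ∈ Wfam x ∧ w y = y}
      = {w | w ∈ Wfam x ∧ ∀ v ∈ segment ℝ x y, w v = v} :=
        setOf_fixing_point_eq_setOf_fixing_segment (hfix x hx) y
    _ = {w | w ∈ Wfam y ∧ ∀ v ∈ segment ℝ x y, w v = v} :=
        (convex_segment x y).isPreconnected.apply_eq_of_eventually_eq hlocal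
          (left_mem_segment ℝ x y) (right_mem_segment ℝ x y)
    _ = {w | w ∈ Wfam y ∧ w x = x} := by
        rw [segment_symm]
        exact (setOf_fixing_point_eq_setOf_fixing_segment (hfix y hy) x).symm

/-- Let `P` be a convex subset of a real affine space, and for each
`x ∈ P` let `W(x)` be a group of affine transformations fixing `x`, such that along any
line segment `l ⊆ P` the pointwise stabilizer `W(z)_l` is locally constant in `z ∈ l`
(for `u ∈ l` close enough to `z`, `W(u)_l = W(z)_l`).  Then `W(x)_y = W(y)_x` for all
`x, y ∈ P`. -/
theorem local_stabilizers_symmetric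
    {V : Type*} [NormedAddCommGroup V] [NormedSpace ℝ V]
    (P : Set V) (hP : Convex ℝ P)
    (Wfam : V → Subgroup (V ≃ᵃ[ℝ] V))
    (hfix : ∀ x ∈ P, ∀ w ∈ Wfam x, w x = x)
    (hloc : ∀ x ∈ P, ∀ y ∈ P, ∀ z ∈ segment ℝ x y, ∃ ε > (0:ℝ),
      ∀ u ∈ segment ℝ x y, ‖u - z‖ < ε →
        {w : V ≃ᵃ[ℝ] V | w ∈ Wfam u ∧ ∀ v ∈ segment ℝ x y, w v = v} =
          {w : V ≃ᵃ[ℝ] V | w ∈ Wfam z ∧ ∀ v ∈ segment ℝ x y, w v = v}) :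
    ∀ x ∈ P, ∀ y ∈ P,
      {w : V ≃ᵃ[ℝ] V | w ∈ Wfam x ∧ w y = y} =
        {w : V ≃ᵃ[ℝ] V | w ∈ Wfam y ∧ w x = x} :=
  local_stabilizers_symmetric_general P Wfam hfix hloc
end

section
/- Let U be a convex open subset of ℝⁿ, P ⊆ U a convex subset, and ω a smooth 1-form on U whose exterior derivative dω vanishes at every point of P. Fix a ∈ P and define f(x) = ∫_{[a,x]} ω for x ∈ U (integral along the line segment). Then df(x) = ω(x) for all x ∈ P. -/
open Metric Set intervalIntegral
open scoped Interval

set_option maxHeartbeats 1000000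

/-- Let `U ⊆ ℝⁿ` be open and convex, `P ⊆ U` convex, and `ω` a smooth
1-form on `U` whose exterior derivative vanishes at every point of `P` (i.e. the
derivative of `ω` is symmetric at points of `P`).  For `a ∈ P` define
`f(x) = ∫_{[a,x]} ω` (integration along the segment).  Then `df(x) = ω(x)` for all
`x ∈ P`. -/
theorem closed_one_form_is_gradient_on_convex
    (n : ℕ) (U : Set (EuclideanSpace ℝ (Fin n))) (hU : IsOpen U) (hUconv : Convex ℝ U)
    (P : Set (EuclideanSpace ℝ (Fin n))) (hPU : P ⊆ U) (hPconv : Convex ℝ P)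
    (ω : EuclideanSpace ℝ (Fin n) → (EuclideanSpace ℝ (Fin n) →L[ℝ] ℝ))
    (hω : ContDiffOn ℝ (⊤ : ℕ∞) ω U)
    (hclosed : ∀ p ∈ P, ∀ u v : EuclideanSpace ℝ (Fin n),
      fderiv ℝ ω p u v = fderiv ℝ ω p v u)
    (a : EuclideanSpace ℝ (Fin n)) (ha : a ∈ P) :
    ∀ x ∈ P,
      HasFDerivAt (fun y => ∫ t in (0:ℝ)..1, ω (a + t • (y - a)) (y - a)) (ω x) x := by
  have hωdiff : ∀ p ∈ U, HasFDerivAt ω (fderiv ℝ ω p) p := fun p hp =>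
    (((hω.differentiableOn (by simp)) p hp).differentiableAt (hU.mem_nhds hp)).hasFDerivAt
  have hωcont : ContinuousOn ω U := hω.continuousOn
  have hω'cont : ContinuousOn (fderiv ℝ ω) U :=
    hω.continuousOn_fderiv_of_isOpen hU (by simp)
  intro x hx
  have hsegcompact : IsCompact (segment ℝ a x) := by
    rw [segment_eq_image' ℝ a x]
    exact isCompact_Icc.image (continuous_const.add (continuous_id.smul continuous_const))
  -- the segment from a to x lies in P (hence in U)
  have hsegP : segment ℝ a x ⊆ P := hPconv.segment_subset ha hx
  have hγP : ∀ t ∈ Icc (0:ℝ) 1, a + t • (x - a) ∈ P := by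
    intro t ht
    apply hsegP
    rw [segment_eq_image' ℝ a x]
    exact ⟨t, ht, rfl⟩
  -- choose ε so that the ε-cthickening of the segment lies in U
  obtain ⟨ε, εpos, hεU⟩ :=
    hsegcompact.exists_cthickening_subset_open hU
      (hsegP.trans hPU)
  set K : Set (EuclideanSpace ℝ (Fin n)) := cthickening ε (segment ℝ a x) with hK
  have hKcompact : IsCompact K := hsegcompact.cthickening
  have hKU : K ⊆ U := hεU
  -- all auxiliary points lie in K
  have hmemK : ∀ y ∈ ball x ε, ∀ t ∈ Icc (0:ℝ) 1, a + t • (y - a) ∈ K := by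
    intro y hy t ht
    have hseg : a + t • (x - a) ∈ segment ℝ a x := by
      rw [segment_eq_image' ℝ a x]; exact ⟨t, ht, rfl⟩
    apply mem_cthickening_of_dist_le _ _ _ _ hseg
    have : a + t • (y - a) - (a + t • (x - a)) = t • (y - x) := by
      module
    rw [dist_eq_norm, this, norm_smul]
    calc ‖t‖ * ‖y - x‖ ≤ 1 * ‖y - x‖ := by
          apply mul_le_mul_of_nonneg_right _ (norm_nonneg _)
          rw [Real.norm_eq_abs, abs_of_nonneg ht.1]; exact ht.2
      _ = ‖y - x‖ := one_mul _
      _ ≤ ε := le_of_lt (mem_ball_iff_norm.mp hy)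
  -- bounds on ω and its derivative on K
  obtain ⟨C₁, hC₁⟩ := hKcompact.exists_bound_of_continuousOn (hωcont.mono hKU)
  obtain ⟨C₂, hC₂⟩ := hKcompact.exists_bound_of_continuousOn (f := fderiv ℝ ω) (by exact hω'cont.mono hKU)
  have hC₂0 : ∀ p ∈ K, ‖fderiv ℝ ω p‖ ≤ max C₂ 0 := fun p hp =>
    le_max_of_le_left (hC₂ p hp)
  -- the candidate derivative of the parametrized integrand
  set F' : (EuclideanSpace ℝ (Fin n)) → ℝ → (EuclideanSpace ℝ (Fin n)) →L[ℝ] ℝ := fun y t =>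
    ω (a + t • (y - a)) + t • ((fderiv ℝ ω (a + t • (y - a))).flip (y - a)) with hF'
  -- continuity of t ↦ stuff
  have hγcont : ∀ y : (EuclideanSpace ℝ (Fin n)), Continuous fun t : ℝ => a + t • (y - a) := fun y =>
    continuous_const.add (continuous_id.smul continuous_const)
  have hmapsIcc : ∀ y ∈ ball x ε, MapsTo (fun t : ℝ => a + t • (y - a)) (Icc 0 1) U :=
    fun y hy t ht => hKU (hmemK y hy t ht)
  have hxball : x ∈ ball x ε := mem_ball_self εpos
  -- differentiability of the integrand in y
  have h_diff : ∀ t ∈ Icc (0:ℝ) 1, ∀ y ∈ ball x ε,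
      HasFDerivAt (fun y : (EuclideanSpace ℝ (Fin n)) => ω (a + t • (y - a)) (y - a)) (F' y t) y := by
    intro t ht y hy
    have hpU : a + t • (y - a) ∈ U := hKU (hmemK y hy t ht)
    set p := a + t • (y - a) with hp
    have hγ : HasFDerivAt (fun y : (EuclideanSpace ℝ (Fin n)) => a + t • (y - a))
        (t • ContinuousLinearMap.id ℝ (EuclideanSpace ℝ (Fin n))) y := by
      have := ((((hasFDerivAt_id (𝕜 := ℝ) y).sub_const a).const_smul t).const_add a)
      simpa using this
    have hωp : HasFDerivAt ω (fderiv ℝ ω p) p := hωdiff p hpU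
    have hc : HasFDerivAt (fun y : (EuclideanSpace ℝ (Fin n)) => ω (a + t • (y - a)))
        ((fderiv ℝ ω p).comp (t • ContinuousLinearMap.id ℝ (EuclideanSpace ℝ (Fin n)))) y := hωp.comp y hγ
    have hu : HasFDerivAt (fun y : (EuclideanSpace ℝ (Fin n)) => y - a) (ContinuousLinearMap.id ℝ (EuclideanSpace ℝ (Fin n))) y := by
      simpa using (hasFDerivAt_id (𝕜 := ℝ) y).sub_const a
    have := hc.clm_apply hu
    refine this.congr_fderiv ?_
    ext v
    simp [hF', ContinuousLinearMap.flip_apply, mul_comm, hp]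
  -- the integrand and its derivative, measurability / integrability
  have hF_meas : ∀ᶠ y in nhds x,
      MeasureTheory.AEStronglyMeasurable (fun t : ℝ => ω (a + t • (y - a)) (y - a))
        (MeasureTheory.volume.restrict (Ι (0:ℝ) 1)) := by
    filter_upwards [ball_mem_nhds x εpos] with y hy
    have hco : ContinuousOn (fun t : ℝ => ω (a + t • (y - a)) (y - a)) (Icc 0 1) := by
      exact ((hωcont.comp (hγcont y).continuousOn (hmapsIcc y hy)).clm_apply
        continuousOn_const)
    have : Ι (0:ℝ) 1 ⊆ Icc 0 1 := by
      rw [uIoc_of_le (by norm_num : (0:ℝ) ≤ 1)]; exact Ioc_subset_Icc_self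
    exact (hco.mono this).aestronglyMeasurable measurableSet_uIoc
  have hF_int : IntervalIntegrable (fun t : ℝ => ω (a + t • (x - a)) (x - a))
      MeasureTheory.volume 0 1 := by
    apply ContinuousOn.intervalIntegrable
    rw [uIcc_of_le (by norm_num : (0:ℝ) ≤ 1)]
    exact (hωcont.comp (hγcont x).continuousOn (hmapsIcc x hxball)).clm_apply
      continuousOn_const
  have hF'contIcc : ContinuousOn (F' x) (Icc 0 1) := by
    have h1 : ContinuousOn (fun t : ℝ => ω (a + t • (x - a))) (Icc 0 1) :=
      hωcont.comp (hγcont x).continuousOn (hmapsIcc x hxball)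
    have h2 : ContinuousOn (fun t : ℝ => fderiv ℝ ω (a + t • (x - a))) (Icc 0 1) :=
      hω'cont.comp (hγcont x).continuousOn (hmapsIcc x hxball)
    have h3 : ContinuousOn
        (fun t : ℝ => (fderiv ℝ ω (a + t • (x - a))).flip (x - a)) (Icc 0 1) := by
      have hflip : Continuous fun g : (EuclideanSpace ℝ (Fin n)) →L[ℝ] (EuclideanSpace ℝ (Fin n)) →L[ℝ] ℝ => g.flip :=
        (ContinuousLinearMap.flipₗᵢ ℝ (EuclideanSpace ℝ (Fin n)) (EuclideanSpace ℝ (Fin n)) ℝ).continuous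
      exact ((hflip.comp_continuousOn h2).clm_apply continuousOn_const)
    exact h1.add (continuousOn_id.smul h3)
  have hF'_meas : MeasureTheory.AEStronglyMeasurable (F' x)
      (MeasureTheory.volume.restrict (Ι (0:ℝ) 1)) := by
    have : Ι (0:ℝ) 1 ⊆ Icc 0 1 := by
      rw [uIoc_of_le (by norm_num : (0:ℝ) ≤ 1)]; exact Ioc_subset_Icc_self
    exact (hF'contIcc.mono this).aestronglyMeasurable measurableSet_uIoc
  -- the uniform bound
  have h_bound : ∀ t ∈ Icc (0:ℝ) 1, ∀ y ∈ ball x ε,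
      ‖F' y t‖ ≤ C₁ + max C₂ 0 * (‖x - a‖ + ε) := by
    intro t ht y hy
    have hpK : a + t • (y - a) ∈ K := hmemK y hy t ht
    have hya : ‖y - a‖ ≤ ‖x - a‖ + ε := by
      calc ‖y - a‖ = ‖(x - a) + (y - x)‖ := by congr 1; abel
        _ ≤ ‖x - a‖ + ‖y - x‖ := norm_add_le _ _
        _ ≤ ‖x - a‖ + ε := by
            have := le_of_lt (mem_ball_iff_norm.mp hy); linarith
    calc ‖F' y t‖ ≤ ‖ω (a + t • (y - a))‖ +
          ‖t • ((fderiv ℝ ω (a + t • (y - a))).flip (y - a))‖ := norm_add_le _ _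
      _ ≤ C₁ + max C₂ 0 * (‖x - a‖ + ε) := by
          gcongr
          · exact hC₁ _ hpK
          · rw [norm_smul]
            have h1 : ‖t‖ ≤ 1 := by
              rw [Real.norm_eq_abs, abs_of_nonneg ht.1]; exact ht.2
            have h2 : ‖(fderiv ℝ ω (a + t • (y - a))).flip (y - a)‖ ≤
                max C₂ 0 * (‖x - a‖ + ε) := by
              calc ‖(fderiv ℝ ω (a + t • (y - a))).flip (y - a)‖
                  ≤ ‖(fderiv ℝ ω (a + t • (y - a))).flip‖ * ‖y - a‖ :=
                    ContinuousLinearMap.le_opNorm _ _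
                _ ≤ max C₂ 0 * (‖x - a‖ + ε) := by
                    rw [ContinuousLinearMap.opNorm_flip]
                    exact mul_le_mul (hC₂0 _ hpK) hya (norm_nonneg _)
                      (le_max_right _ _)
            calc ‖t‖ * ‖(fderiv ℝ ω (a + t • (y - a))).flip (y - a)‖
                ≤ 1 * ‖(fderiv ℝ ω (a + t • (y - a))).flip (y - a)‖ :=
                  mul_le_mul_of_nonneg_right h1 (norm_nonneg _)
              _ = _ := one_mul _
              _ ≤ max C₂ 0 * (‖x - a‖ + ε) := h2
  -- apply differentiation under the integral sign
  have key : HasFDerivAt (fun y : (EuclideanSpace ℝ (Fin n)) => ∫ t in (0:ℝ)..1, ω (a + t • (y - a)) (y - a))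
      (∫ t in (0:ℝ)..1, F' x t) x := by
    apply intervalIntegral.hasFDerivAt_integral_of_dominated_of_fderiv_le
      (bound := fun _ => C₁ + max C₂ 0 * (‖x - a‖ + ε)) (ball_mem_nhds x εpos) hF_meas hF_int hF'_meas
    · apply MeasureTheory.ae_of_all
      intro t ht y hy
      have ht' : t ∈ Icc (0:ℝ) 1 := by
        rw [uIoc_of_le (by norm_num : (0:ℝ) ≤ 1)] at ht
        exact Ioc_subset_Icc_self ht
      exact h_bound t ht' y hy
    · exact intervalIntegrable_const
    · apply MeasureTheory.ae_of_all
      intro t ht y hy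
      have ht' : t ∈ Icc (0:ℝ) 1 := by
        rw [uIoc_of_le (by norm_num : (0:ℝ) ≤ 1)] at ht
        exact Ioc_subset_Icc_self ht
      exact h_diff t ht' y hy
  -- compute the integral of F' x
  have hF'int : IntervalIntegrable (F' x) MeasureTheory.volume 0 1 := by
    apply ContinuousOn.intervalIntegrable
    rwa [uIcc_of_le (by norm_num : (0:ℝ) ≤ 1)]
  have hval : (∫ t in (0:ℝ)..1, F' x t) = ω x := by
    ext v
    rw [ContinuousLinearMap.intervalIntegral_apply hF'int v]
    -- the integrand applied to v, after using closedness
    have hder : ∀ t ∈ Icc (0:ℝ) 1,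
        HasDerivAt (fun t : ℝ => t * ω (a + t • (x - a)) v) (F' x t v) t := by
      intro t ht
      have hpU : a + t • (x - a) ∈ U := hKU (hmemK x hxball t ht)
      have hγ' : HasDerivAt (fun t : ℝ => a + t • (x - a)) (x - a) t := by
        have := ((hasDerivAt_id t).smul_const (x - a)).const_add a
        simpa using this
      have hωp : HasDerivAt (fun t : ℝ => ω (a + t • (x - a)))
          (fderiv ℝ ω (a + t • (x - a)) (x - a)) t :=
        (hωdiff _ hpU).comp_hasDerivAt t hγ'
      have happ : HasDerivAt (fun t : ℝ => ω (a + t • (x - a)) v)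
          (fderiv ℝ ω (a + t • (x - a)) (x - a) v) t := by
        have := hωp.clm_apply (hasDerivAt_const t v)
        simpa using this
      have := (hasDerivAt_id t).mul happ
      have heq : F' x t v = 1 * (ω (a + t • (x - a)) v) +
          t * (fderiv ℝ ω (a + t • (x - a)) (x - a) v) := by
        have hsym := hclosed _ (hγP t ht) v (x - a)
        simp only [hF', ContinuousLinearMap.add_apply, ContinuousLinearMap.coe_smul',
          Pi.smul_apply, ContinuousLinearMap.flip_apply, smul_eq_mul, hsym, one_mul]
      rw [heq]
      exact this
    have hcont' : ContinuousOn (fun t : ℝ => F' x t v) (Icc 0 1) :=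
      hF'contIcc.clm_apply continuousOn_const
    have hint' : IntervalIntegrable (fun t : ℝ => F' x t v) MeasureTheory.volume 0 1 := by
      apply ContinuousOn.intervalIntegrable
      rwa [uIcc_of_le (by norm_num : (0:ℝ) ≤ 1)]
    have := intervalIntegral.integral_eq_sub_of_hasDerivAt
      (f := fun t : ℝ => t * ω (a + t • (x - a)) v) (by
        intro t ht
        rw [uIcc_of_le (by norm_num : (0:ℝ) ≤ 1)] at ht
        exact hder t ht) hint'
    rw [this]
    simp
  rwa [hval] at key
end
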